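/- arXiv:1812.00571 — 3 statements merged into one kernel-verified Lean document; each statement's English description precedes it below -/
import Mathlib

section
/- If I is a strongly stable monomial ideal in k[x_1,...,x_n] and m is a monomial with deg(m) ≤ d, then m ∈ I if and only if b-pol(m) ∈ b-pol(I). -/
open MvPolynomial Classical

noncomputable section

/-- The monomial `x^a` with coefficient `1`. -/
def mon {σ : Type*} (k : Type*) [Field k] (a : σ →₀ ℕ) : MvPolynomial σ k :=
  MvPolynomial.monomial a 1

/-- `x^a` for an exponent vector given as a function on a finite type. -/
def monF {σ : Type*} [Fintype σ] (k : Type*) [Field k] (a : σ → ℕ) : MvPolynomial σ k :=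
  mon k (Finsupp.equivFunOnFinite.symm a)

/-- A monomial ideal: an ideal generated by monomials. -/
def IsMonomialIdeal {σ : Type*} [Fintype σ] {k : Type*} [Field k]
    (I : Ideal (MvPolynomial σ k)) : Prop :=
  ∃ A : Set (σ → ℕ), I = Ideal.span ((monF k) '' A)

/-- The set `G(I)` of (exponent vectors of) minimal monomial generators of a monomial
ideal `I`: monomials in `I` such that dividing by any variable leaves `I`. -/
def minGens {σ : Type*} [Fintype σ] {k : Type*} [Field k]
    (I : Ideal (MvPolynomial σ k)) : Set (σ → ℕ) :=
  {a | monF k a ∈ I ∧ ∀ i : σ, 0 < a i → monF k (a - Pi.single i 1) ∉ I}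

/-- The total degree `|a|` of an exponent vector. -/
def degV {σ : Type*} [Fintype σ] (a : σ → ℕ) : ℕ := ∑ i, a i

/-- A strongly stable (monomial) ideal in `k[x_1, …, x_n]`. -/
def StronglyStable {n : ℕ} {k : Type*} [Field k]
    (I : Ideal (MvPolynomial (Fin n) k)) : Prop :=
  IsMonomialIdeal I ∧
    ∀ a ∈ minGens I, ∀ i j : Fin n, j < i → 0 < a i →
      monF k (a - Pi.single i 1 + Pi.single j 1) ∈ I

/-- All minimal generators of `I` have degree at most `d`. -/
def GensDegLE {σ : Type*} [Fintype σ] {k : Type*} [Field k]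
    (I : Ideal (MvPolynomial σ k)) (d : ℕ) : Prop :=
  ∀ a ∈ minGens I, degV a ≤ d

/-- `psum a i = a_1 + ⋯ + a_{i-1}` (the partial sum over indices `< i`). -/
def psum {n : ℕ} (a : Fin n → ℕ) (i : Fin n) : ℕ :=
  ∑ j ∈ Finset.univ.filter (fun j => j < i), a j

/-- The exponent vector of the alternative polarization `b-pol(x^a)`:
`b-pol(x^a) = ∏_{1 ≤ i ≤ n, b_{i-1}+1 ≤ j ≤ b_i} x_{i,j}` where `b_i = a_1 + ⋯ + a_i`. -/
def bpolExp {n : ℕ} (d : ℕ) (a : Fin n → ℕ) : Fin n × Fin d → ℕ := fun p =>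
  if psum a p.1 ≤ (p.2 : ℕ) ∧ (p.2 : ℕ) < psum a p.1 + a p.1 then 1 else 0

/-- The alternative polarization `b-pol(I) ⊆ k[x_{i,j}]` of a monomial ideal `I`. -/
def bpolIdeal {n : ℕ} (d : ℕ) {k : Type*} [Field k]
    (I : Ideal (MvPolynomial (Fin n) k)) : Ideal (MvPolynomial (Fin n × Fin d) k) :=
  Ideal.span {q | ∃ a ∈ minGens I, q = monF k (bpolExp d a)}

/-- The prime monomial ideal `(x_i : i ∈ F)`. -/
def varIdeal {σ : Type*} (k : Type*) [Field k] (F : Set σ) : Ideal (MvPolynomial σ k) :=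
  Ideal.span (MvPolynomial.X '' F)

/-- `F` gives an irreducible component `(x_i : i ∈ F)` of the squarefree monomial ideal `J`,
i.e. `F` is minimal among subsets with `J ⊆ (x_i : i ∈ F)`. -/
def IsIrredCompSF {σ : Type*} {k : Type*} [Field k]
    (J : Ideal (MvPolynomial σ k)) (F : Set σ) : Prop :=
  J ≤ varIdeal k F ∧ ∀ F' ⊆ F, J ≤ varIdeal k F' → F' = F

/-- The Alexander dual of a squarefree monomial ideal: the ideal generated by the
monomials `∏_{i ∈ F} x_i` over the irreducible components `(x_i : i ∈ F)` of `J`. -/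
def adual {σ : Type*} [Fintype σ] {k : Type*} [Field k]
    (J : Ideal (MvPolynomial σ k)) : Ideal (MvPolynomial σ k) :=
  Ideal.span {q | ∃ F : Set σ, IsIrredCompSF J F ∧
    q = monF k (fun i => if i ∈ F then 1 else 0)}

/-- Transpose `x_{i,j} ↦ y_{j,i}` of an ideal of `k[x_{i,j}]`. -/
def transposeIdeal {n d : ℕ} {k : Type*} [Field k]
    (J : Ideal (MvPolynomial (Fin n × Fin d) k)) : Ideal (MvPolynomial (Fin d × Fin n) k) :=
  Ideal.map (MvPolynomial.rename (Prod.swap : Fin n × Fin d → Fin d × Fin n)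
    : MvPolynomial (Fin n × Fin d) k →ₐ[k] MvPolynomial (Fin d × Fin n) k) J

end

section Aux

variable {n d : ℕ} {k : Type*} [Field k]

lemma monF_mul_sub {σ : Type*} [Fintype σ] {b a : σ → ℕ} (h : ∀ i, b i ≤ a i) :
    monF k (a - b) * monF k b = monF k a := by
  have h2 : (Finsupp.equivFunOnFinite.symm (a - b)) + Finsupp.equivFunOnFinite.symm b
      = Finsupp.equivFunOnFinite.symm a := by
    ext i
    simp only [Finsupp.add_apply, Finsupp.coe_equivFunOnFinite_symm, Pi.sub_apply]
    exact Nat.sub_add_cancel (h i)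
  rw [monF, monF, monF, mon, mon, mon, monomial_mul, mul_one, h2]

lemma monF_dvd_mem {σ : Type*} [Fintype σ] {I : Ideal (MvPolynomial σ k)} {b a : σ → ℕ}
    (hb : monF k b ∈ I) (h : ∀ i, b i ≤ a i) : monF k a ∈ I := by
  rw [← monF_mul_sub (k := k) h]
  exact I.mul_mem_left _ hb

lemma degV_add_single {a : Fin n → ℕ} (t : Fin n) :
    degV (a + Pi.single t 1) = degV a + 1 := by
  simp only [degV, Pi.add_apply, Finset.sum_add_distrib]
  congr 1
  simp [Pi.single_apply]

lemma sub_single_add {a : Fin n → ℕ} {t : Fin n} (h : 0 < a t) :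
    a - Pi.single t 1 + Pi.single t 1 = a := by
  funext l
  by_cases hl : l = t
  · subst hl; simp only [Pi.add_apply, Pi.sub_apply, Pi.single_eq_same]; omega
  · simp [Pi.single_apply, hl]

lemma degV_sub_single {a : Fin n → ℕ} {t : Fin n} (h : 0 < a t) :
    degV (a - Pi.single t 1) + 1 = degV a := by
  conv_rhs => rw [← sub_single_add h]
  rw [degV_add_single]

lemma degV_mono {a b : Fin n → ℕ} (h : ∀ i, b i ≤ a i) : degV b ≤ degV a :=
  Finset.sum_le_sum fun i _ => h i

end Aux
section Aux2

variable {n d : ℕ} {k : Type*} [Field k]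

lemma instEqFin (n : ℕ) :
    (fun (a b : Fin n) => Classical.propDecidable (a = b)) = instDecidableEqFin n := by
  funext a b
  exact Subsingleton.elim _ _

lemma exists_minGen_le {I : Ideal (MvPolynomial (Fin n) k)} :
    ∀ (N : ℕ) (a : Fin n → ℕ), degV a ≤ N → monF k a ∈ I → ∃ g ∈ minGens I, ∀ l, g l ≤ a l := by
  intro N
  induction N with
  | zero =>
    intro a hN ha
    refine ⟨a, ⟨ha, fun i hi => ?_⟩, fun l => le_refl _⟩
    exfalso
    have : 0 < degV a := lt_of_lt_of_le hi (Finset.single_le_sum (f := a)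
      (fun j _ => Nat.zero_le _) (Finset.mem_univ i))
    omega
  | succ N ih =>
    intro a hN ha
    by_cases hmin : a ∈ minGens I
    · exact ⟨a, hmin, fun l => le_refl _⟩
    · simp only [minGens, Set.mem_setOf_eq, not_and, not_forall] at hmin
      obtain ⟨i, hi, hmem⟩ := hmin ha
      rw [not_not] at hmem
      rw [instEqFin] at hmem
      have hdeg : degV (a - Pi.single i 1) ≤ N := by
        have := degV_sub_single (a := a) hi
        omega
      obtain ⟨g, hg, hle⟩ := ih _ hdeg hmem
      exact ⟨g, hg, fun l => le_trans (hle l) (Nat.sub_le _ _)⟩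

end Aux2
section Aux3

variable {n d : ℕ} {k : Type*} [Field k]

lemma minGen_mem {I : Ideal (MvPolynomial (Fin n) k)} {g : Fin n → ℕ}
    (hg : g ∈ minGens I) : monF k g ∈ I := hg.1

lemma move_apply (b : Fin n → ℕ) {i j : Fin n} (hij : i ≠ j) (l : Fin n) :
    ((b - Pi.single i 1 + Pi.single j 1 : Fin n → ℕ)) l
      = if l = i then b i - 1 else if l = j then b j + 1 else b l := by
  by_cases h1 : l = i
  · subst h1; simp [Pi.single_apply, hij]
  · by_cases h2 : l = j
    · subst h2; simp [Pi.single_apply, h1]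
    · simp [Pi.single_apply, h1, h2]

lemma swap_mem {I : Ideal (MvPolynomial (Fin n) k)} (hss : StronglyStable I)
    {b : Fin n → ℕ} {i j : Fin n} (hb : monF k b ∈ I) (hji : j < i) (hbi : 0 < b i) :
    monF k (b - Pi.single i 1 + Pi.single j 1) ∈ I := by
  obtain ⟨g, hg, hgle⟩ := exists_minGen_le (degV b) b le_rfl hb
  have hij : i ≠ j := (ne_of_gt hji)
  by_cases hcase : g i < b i
  · refine monF_dvd_mem (minGen_mem hg) ?_
    intro l
    rw [move_apply b hij]
    by_cases h1 : l = i
    · subst h1; rw [if_pos rfl]; omega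
    · by_cases h2 : l = j
      · subst h2; rw [if_neg h1, if_pos rfl]; have := hgle l; omega
      · rw [if_neg h1, if_neg h2]; exact hgle l
  · have hgi : 0 < g i := by have := hgle i; omega
    have hgbi : g i = b i := le_antisymm (hgle i) (by omega)
    have hmem := hss.2 g hg i j hji hgi
    refine monF_dvd_mem hmem ?_
    intro l
    rw [move_apply g hij, move_apply b hij]
    by_cases h1 : l = i
    · rw [if_pos h1, if_pos h1]; omega
    · by_cases h2 : l = j
      · rw [if_neg h1, if_neg h1, if_pos h2, if_pos h2]; have := hgle j; omega
      · rw [if_neg h1, if_neg h1, if_neg h2, if_neg h2]; exact hgle l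

end Aux3
section Aux4

variable {n d : ℕ} {k : Type*} [Field k]

/-- Extension of an exponent vector to `ℕ` by zero. -/
def bext {n : ℕ} (b : Fin n → ℕ) (m : ℕ) : ℕ := if h : m < n then b ⟨m, h⟩ else 0

lemma bext_coe (b : Fin n → ℕ) (j : Fin n) : bext b (j : ℕ) = b j := by
  simp [bext]

lemma psum_eq_range (b : Fin n → ℕ) (i : Fin n) :
    psum b i = ∑ j ∈ Finset.range (i : ℕ), bext b j := by
  rw [_root_.psum, Finset.sum_filter]
  rw [show Finset.range (i : ℕ) = (Finset.range n).filter (fun j => j < (i : ℕ)) by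
    ext x; simp only [Finset.mem_range, Finset.mem_filter]; have := i.isLt; omega]
  rw [Finset.sum_filter, ← Fin.sum_univ_eq_sum_range (fun j => if j < (i : ℕ) then bext b j else 0) n]
  refine Finset.sum_congr rfl fun j _ => ?_
  rw [bext_coe]
  by_cases h : j < i
  · rw [if_pos h, if_pos (Fin.lt_def.mp h)]
  · rw [if_neg h, if_neg (fun hc => h (Fin.lt_def.mpr hc))]

lemma degV_eq_range (b : Fin n → ℕ) :
    degV b = ∑ j ∈ Finset.range n, bext b j := by
  rw [degV, ← Fin.sum_univ_eq_sum_range (fun j => bext b j) n]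
  exact Finset.sum_congr rfl fun j _ => (bext_coe b j).symm

lemma psum_add_le (b : Fin n → ℕ) (i : Fin n) : psum b i + b i ≤ degV b := by
  rw [psum_eq_range, degV_eq_range, ← bext_coe b i, ← Finset.sum_range_succ]
  exact Finset.sum_le_sum_of_subset (Finset.range_subset_range.2 i.isLt)

/-- The "prefix" of `a` of total degree `s` (filled greedily from the left). -/
def pref {n : ℕ} (a : Fin n → ℕ) (s : ℕ) : Fin n → ℕ := fun i => min (a i) (s - psum a i)

lemma pref_le (a : Fin n → ℕ) (s : ℕ) (i : Fin n) : pref a s i ≤ a i := min_le_left _ _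

lemma sum_bext_pref (a : Fin n → ℕ) (s : ℕ) :
    ∀ m, m ≤ n → ∑ j ∈ Finset.range m, bext (pref a s) j
      = min (∑ j ∈ Finset.range m, bext a j) s := by
  intro m
  induction m with
  | zero => simp
  | succ m ih =>
    intro h
    have hm : m < n := h
    rw [Finset.sum_range_succ, Finset.sum_range_succ, ih (by omega)]
    have hb : bext (pref a s) m = min (bext a m) (s - ∑ j ∈ Finset.range m, bext a j) := by
      simp only [bext, dif_pos hm, pref]
      rw [show _root_.psum a ⟨m, hm⟩ = ∑ j ∈ Finset.range m, bext a j from psum_eq_range a ⟨m, hm⟩]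
      simp [bext]
    rw [hb]
    omega

lemma psum_pref (a : Fin n → ℕ) (s : ℕ) (i : Fin n) :
    psum (pref a s) i = min (psum a i) s := by
  rw [psum_eq_range, psum_eq_range]
  exact sum_bext_pref a s _ i.isLt.le

lemma degV_pref (a : Fin n → ℕ) (s : ℕ) : degV (pref a s) = min (degV a) s := by
  rw [degV_eq_range, degV_eq_range]
  exact sum_bext_pref a s n le_rfl

lemma bpol_pref_le (a : Fin n → ℕ) (s : ℕ) (pt : Fin n × Fin d) :
    bpolExp d (pref a s) pt ≤ bpolExp d a pt := by
  simp only [bpolExp, psum_pref, pref]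
  split_ifs with h1 h2
  · omega
  · exfalso; omega
  · omega
  · omega

end Aux4
section Aux5

variable {n d : ℕ} {k : Type*} [Field k]

lemma degV_split (x : Fin n → ℕ) (j : Fin n) :
    degV x = psum x j + x j + ∑ l ∈ Finset.univ.filter (fun l => j < l), x l := by
  rw [degV, _root_.psum,
    ← Finset.sum_filter_add_sum_filter_not Finset.univ (fun l => l < j) x, add_assoc]
  congr 1
  rw [← Finset.sum_filter_add_sum_filter_not (Finset.univ.filter (fun l => ¬ l < j))
    (fun l => l = j) x, Finset.filter_filter, Finset.filter_filter]
  congr 1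
  · rw [show Finset.univ.filter (fun l => ¬ l < j ∧ l = j) = {j} by
      ext l
      simp only [Finset.mem_filter, Finset.mem_univ, true_and, Finset.mem_singleton]
      constructor
      · exact fun h => h.2
      · rintro rfl; exact ⟨lt_irrefl _, rfl⟩]
    exact Finset.sum_singleton _ _
  · congr 1
    ext l
    simp only [Finset.mem_filter, Finset.mem_univ, true_and]
    constructor
    · rintro ⟨h1, h2⟩
      rcases lt_trichotomy l j with h | h | h
      · exact absurd h h1
      · exact absurd h h2
      · exact h
    · intro h
      exact ⟨not_lt_of_gt h, ne_of_gt h⟩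

/-- The weight `∑ l, l · b l`, a measure for termination of the exchange process. -/
def muV {n : ℕ} (b : Fin n → ℕ) : ℕ := ∑ l : Fin n, (l : ℕ) * b l

lemma muV_add_single (b : Fin n → ℕ) (t : Fin n) :
    muV (b + Pi.single t 1) = muV b + (t : ℕ) := by
  simp only [muV, Pi.add_apply, Nat.mul_add, Finset.sum_add_distrib]
  congr 1
  calc ∑ l : Fin n, (l : ℕ) * (Pi.single t 1 : Fin n → ℕ) l
      = ∑ l : Fin n, if l = t then (t : ℕ) else 0 :=
        Finset.sum_congr rfl (fun l _ => by by_cases h : l = t <;> simp [Pi.single_apply, h])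
    _ = (t : ℕ) := by rw [Finset.sum_ite_eq']; simp

end Aux5
section Aux6

variable {n d : ℕ} {k : Type*} [Field k]

lemma pref_mem {I : Ideal (MvPolynomial (Fin n) k)} (hss : StronglyStable I) (a : Fin n → ℕ) :
    ∀ (M : ℕ) (b : Fin n → ℕ), muV b ≤ M → monF k b ∈ I → (∀ l, b l ≤ a l) →
      monF k (pref a (degV b)) ∈ I := by
  intro M
  induction M using Nat.strong_induction_on with
  | _ M ih =>
    intro b hM hbI hba
    by_cases heq : b = pref a (degV b)
    · rw [← heq]; exact hbI
    · set s := degV b with hs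
      set p := pref a s with hp
      have hsle : s ≤ degV a := degV_mono hba
      have hdegp : degV p = s := by rw [hp, degV_pref]; omega
      -- find the least index where b and p differ
      have hFne : (Finset.univ.filter (fun l => b l ≠ p l)).Nonempty := by
        by_contra hc
        rw [Finset.not_nonempty_iff_eq_empty, Finset.filter_eq_empty_iff] at hc
        exact heq (funext fun l => by
          have := hc (Finset.mem_univ l); simpa using this)
      obtain ⟨j, hjF, hjmin⟩ :=
        Finset.exists_min_image (Finset.univ.filter (fun l => b l ≠ p l)) (fun l => (l : ℕ)) hFne
      have hbj_ne : b j ≠ p j := (Finset.mem_filter.1 hjF).2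
      have hagree : ∀ l, l < j → b l = p l := by
        intro l hl
        by_contra hne
        have := hjmin l (Finset.mem_filter.2 ⟨Finset.mem_univ l, hne⟩)
        exact absurd (Fin.lt_def.1 hl) (not_lt.2 this)
      have hpsum : psum b j = psum p j :=
        Finset.sum_congr rfl fun l hl => hagree l (Finset.mem_filter.1 hl).2
      have hpj : p j = min (a j) (s - psum a j) := rfl
      have hpsum_pref : psum p j = min (psum a j) s := psum_pref a s j
      have hble : psum b j + b j ≤ s := hs ▸ psum_add_le b j
      have hbj : b j < p j := by
        have hbaj := hba j
        omega
      -- find an index i > j with b i > 0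
      have htail : 0 < ∑ l ∈ Finset.univ.filter (fun l => j < l), b l := by
        have e1 := degV_split b j
        have e2 := degV_split p j
        omega
      have hex : ∃ i, j < i ∧ 0 < b i := by
        by_contra hc
        push_neg at hc
        have : ∑ l ∈ Finset.univ.filter (fun l => j < l), b l = 0 :=
          Finset.sum_eq_zero fun l hl => by
            have := hc l (Finset.mem_filter.1 hl).2
            omega
        omega
      obtain ⟨i, hji, hbi⟩ := hex
      have hij : i ≠ j := (ne_of_gt hji)
      set b' := b - Pi.single i 1 + Pi.single j 1 with hb'
      have hb'I : monF k b' ∈ I := swap_mem hss hbI hji hbi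
      have hb'a : ∀ l, b' l ≤ a l := by
        intro l
        rw [hb', move_apply b hij]
        by_cases h1 : l = i
        · rw [if_pos h1]
          subst h1
          have := hba l
          omega
        · by_cases h2 : l = j
          · rw [if_neg h1, if_pos h2]
            subst h2
            have h3 := pref_le a s l
            omega
          · rw [if_neg h1, if_neg h2]; exact hba l
      have hdeg' : degV b' = degV b := by
        have h1 : degV b' = degV (b - Pi.single i 1) + 1 := degV_add_single _
        have h2 : degV (b - Pi.single i 1) + 1 = degV b := degV_sub_single hbi
        omega
      have hmu : muV b' < muV b := by
        have h1 : muV b' = muV (b - Pi.single i 1) + (j : ℕ) := muV_add_single _ _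
        have h2 : muV b = muV (b - Pi.single i 1) + (i : ℕ) := by
          conv_lhs => rw [← sub_single_add hbi]
          exact muV_add_single _ _
        have h3 : (j : ℕ) < (i : ℕ) := Fin.lt_def.1 hji
        omega
      have := ih (muV b') (lt_of_lt_of_le hmu hM) b' le_rfl hb'I hb'a
      rw [hdeg'] at this
      exact this

end Aux6
section Aux7

variable {n d : ℕ} {k : Type*} [Field k]

lemma forward_aux {I : Ideal (MvPolynomial (Fin n) k)} (hss : StronglyStable I)
    (a : Fin n → ℕ) :
    ∀ (s : ℕ), (∃ b : Fin n → ℕ, (∀ l, b l ≤ a l) ∧ degV b = s ∧ monF k b ∈ I) →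
      ∃ g ∈ minGens I, ∀ pt : Fin n × Fin d, bpolExp d g pt ≤ bpolExp d a pt := by
  intro s
  induction s using Nat.strong_induction_on with
  | _ s ih =>
    rintro ⟨b, hba, hs, hbI⟩
    have hpI : monF k (pref a s) ∈ I := by
      have := pref_mem hss a (muV b) b le_rfl hbI hba
      rwa [hs] at this
    have hsle : s ≤ degV a := hs ▸ degV_mono hba
    have hdegp : degV (pref a s) = s := by rw [degV_pref]; omega
    by_cases hmin : pref a s ∈ minGens I
    · exact ⟨pref a s, hmin, fun pt => bpol_pref_le a s pt⟩
    · simp only [minGens, Set.mem_setOf_eq, not_and, not_forall] at hmin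
      obtain ⟨i, hi, hmem⟩ := hmin hpI
      rw [not_not] at hmem
      rw [instEqFin] at hmem
      have hlt : degV (pref a s - Pi.single i 1) < s := by
        have := degV_sub_single (a := pref a s) hi
        omega
      exact ih _ hlt ⟨pref a s - Pi.single i 1,
        fun l => le_trans (Nat.sub_le _ _) (pref_le a s l), rfl, hmem⟩

lemma mem_bpol_iff {I : Ideal (MvPolynomial (Fin n) k)} (a : Fin n → ℕ) :
    monF k (bpolExp d a) ∈ bpolIdeal d I ↔
      ∃ g ∈ minGens I, ∀ pt : Fin n × Fin d, bpolExp d g pt ≤ bpolExp d a pt := by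
  have hset : {q : MvPolynomial (Fin n × Fin d) k | ∃ g ∈ minGens I, q = monF k (bpolExp d g)}
      = (fun s0 => monomial s0 (1 : k)) ''
        ((fun g => Finsupp.equivFunOnFinite.symm (bpolExp d g)) '' minGens I) := by
    ext q
    simp only [Set.mem_setOf_eq, Set.mem_image, exists_exists_and_eq_and, monF, mon]
    constructor
    · rintro ⟨g, hg, rfl⟩; exact ⟨g, hg, rfl⟩
    · rintro ⟨g, hg, rfl⟩; exact ⟨g, hg, rfl⟩
  rw [bpolIdeal, hset, mem_ideal_span_monomial_image]
  constructor
  · intro h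
    have hsup : Finsupp.equivFunOnFinite.symm (bpolExp d a) ∈ (monF k (bpolExp d a)).support := by
      rw [monF, mon, support_monomial, if_neg (one_ne_zero)]
      exact Finset.mem_singleton_self _
    obtain ⟨si, hsi, hle⟩ := h _ hsup
    obtain ⟨g, hg, rfl⟩ := hsi
    refine ⟨g, hg, fun pt => ?_⟩
    have := hle pt
    simpa using this
  · rintro ⟨g, hg, hle⟩
    intro xi hxi
    rw [monF, mon, support_monomial, if_neg (one_ne_zero), Finset.mem_singleton] at hxi
    subst hxi
    refine ⟨Finsupp.equivFunOnFinite.symm (bpolExp d g), ⟨g, hg, rfl⟩, ?_⟩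
    intro pt
    simpa using hle pt

end Aux7
/-- If `I` is a strongly stable monomial ideal in `k[x_1,…,x_n]` and `m`
is a monomial with `deg m ≤ d`, then `m ∈ I` iff `b-pol(m) ∈ b-pol(I)`. -/
theorem mem_iff_bpol_mem {n d : ℕ} {k : Type*} [Field k]
    (I : Ideal (MvPolynomial (Fin n) k)) (hss : StronglyStable I) (hd : GensDegLE I d)
    (a : Fin n → ℕ) (ha : degV a ≤ d) :
    monF k a ∈ I ↔ monF k (bpolExp d a) ∈ bpolIdeal d I := by
  constructor
  · intro h
    exact (mem_bpol_iff a).2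
      (forward_aux hss a (degV a) ⟨a, fun l => le_rfl, rfl, h⟩)
  · intro h
    obtain ⟨g, hg, hle⟩ := (mem_bpol_iff a).1 h
    refine monF_dvd_mem (minGen_mem hg) ?_
    intro i
    by_cases hgi : g i = 0
    · omega
    · have hdg : degV g ≤ d := hd g hg
      have h1 : psum g i + g i ≤ degV g := psum_add_le g i
      have e0 := hle (i, ⟨psum g i, by omega⟩)
      have e1 := hle (i, ⟨psum g i + g i - 1, by omega⟩)
      simp only [bpolExp] at e0 e1
      split_ifs at e0 with h2 h3 <;> split_ifs at e1 with h4 h5 <;> omega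
end

section
/- For every strongly stable ideal I ⊂ k[x_1,...,x_n] with all minimal generators of degree ≤ d, there exists a strongly stable ideal I* ⊂ k[y_1,...,y_d] with all minimal generators of degree ≤ n such that b-pol(I*) = (b-pol(I)^∨)^t, where (−)^∨ is the Alexander dual and (−)^t is the transpose isomorphism x_{i,j} ↦ y_{j,i}. -/
open MvPolynomial Classical

noncomputable section SY

namespace SY

open Finset

/-- partial sum over ℕ-indices `< x`. -/
def PsN {m : ℕ} (a : Fin m → ℕ) (x : ℕ) : ℕ :=
  ∑ j ∈ Finset.range x, (if h : j < m then a ⟨j, h⟩ else 0)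

lemma PsN_mono {m : ℕ} (a : Fin m → ℕ) {x y : ℕ} (h : x ≤ y) : PsN a x ≤ PsN a y := by
  unfold PsN
  exact Finset.sum_le_sum_of_subset (Finset.range_subset_range.2 h)

lemma PsN_succ {m : ℕ} (a : Fin m → ℕ) (x : ℕ) :
    PsN a (x+1) = PsN a x + (if h : x < m then a ⟨x, h⟩ else 0) := by
  unfold PsN
  rw [Finset.sum_range_succ]

lemma PsN_zero {m : ℕ} (a : Fin m → ℕ) : PsN a 0 = 0 := rfl

lemma PsN_stable {m : ℕ} (a : Fin m → ℕ) {x : ℕ} (h : m ≤ x) : PsN a x = PsN a m := by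
  induction x with
  | zero => cases Nat.le_zero.mp h; rfl
  | succ y ih =>
    rcases Nat.lt_or_ge y m with hy | hy
    · have : m = y + 1 := by omega
      subst this; rfl
    · rw [PsN_succ, ih hy, dif_neg (by omega)]; omega

lemma PsN_degV {m : ℕ} (a : Fin m → ℕ) : PsN a m = degV a := by
  unfold PsN degV
  rw [← Fin.sum_univ_eq_sum_range]
  apply Finset.sum_congr rfl
  intro i _
  rw [dif_pos i.isLt]

lemma psum_eq_PsN {n : ℕ} (a : Fin n → ℕ) (i : Fin n) : psum a i = PsN a (i : ℕ) := by
  classical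
  set f : ℕ → ℕ := fun j => if h : j < n then (if j < (i:ℕ) then a ⟨j, h⟩ else 0) else 0 with hf
  have h1 : _root_.psum a i = ∑ j : Fin n, f (j : ℕ) := by
    unfold _root_.psum
    rw [Finset.sum_filter]
    apply Finset.sum_congr rfl
    intro j _
    simp only [hf, dif_pos j.isLt, Fin.eta]
    by_cases hj : j < i
    · rw [if_pos hj, if_pos (by exact hj)]
    · rw [if_neg hj, if_neg (by exact fun hc => hj hc)]
  rw [h1, Fin.sum_univ_eq_sum_range]
  have h2 : ∑ j ∈ Finset.range n, f j = ∑ j ∈ Finset.range (i : ℕ), f j := by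
    symm
    apply Finset.sum_subset (Finset.range_subset_range.2 (le_of_lt i.isLt))
    intro j _ hj
    simp only [Finset.mem_range, not_lt] at hj
    simp only [hf]
    split
    · rw [if_neg (by omega)]
    · rfl
  rw [h2]
  apply Finset.sum_congr rfl
  intro j hj
  simp only [Finset.mem_range] at hj
  have hjn : j < n := lt_trans hj i.isLt
  simp only [hf, dif_pos hjn, if_pos hj]


lemma letterEx {m : ℕ} (a : Fin m → ℕ) {s : ℕ} (h : s < PsN a m) :
    ∃ u, u < m ∧ PsN a u ≤ s ∧ s < PsN a (u+1) := by
  classical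
  have hm : 0 < m := by
    by_contra hc
    have : m = 0 := by omega
    subst this
    simp [PsN_zero] at h
  have hex : ∃ u, s < PsN a (u+1) := by
    refine ⟨m-1, ?_⟩
    have : m - 1 + 1 = m := by omega
    rw [this]; exact h
  set u := Nat.find hex with hu
  have hu1 : s < PsN a (u+1) := Nat.find_spec hex
  have hu2 : PsN a u ≤ s := by
    rcases Nat.eq_zero_or_pos u with h0 | h0
    · rw [h0, PsN_zero]; omega
    · have := Nat.find_min hex (m := u - 1) (by omega)
      have heq : u - 1 + 1 = u := by omega
      rw [heq] at this
      omega
  have hum : u < m := by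
    by_contra hc
    have : PsN a u = PsN a m := PsN_stable a (by omega)
    omega
  exact ⟨u, hum, hu2, hu1⟩

lemma letter_le {m : ℕ} (a : Fin m → ℕ) {s u u' : ℕ}
    (h1 : PsN a u' ≤ s) (h2 : s < PsN a (u+1)) : u' ≤ u := by
  by_contra hc
  have : u + 1 ≤ u' := by omega
  have := PsN_mono a this
  omega

/-- membership of `(s, t)` in the polarization support `S(a)`. -/
def InS {n d : ℕ} (a : Fin n → ℕ) (p : Fin n × Fin d) : Prop :=
  PsN a (p.1 : ℕ) ≤ (p.2 : ℕ) ∧ (p.2 : ℕ) < PsN a ((p.1 : ℕ) + 1)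

lemma bpolExp_apply {n d : ℕ} (a : Fin n → ℕ) (p : Fin n × Fin d) :
    bpolExp d a p = if InS a p then 1 else 0 := by
  unfold bpolExp InS
  congr 1
  rw [psum_eq_PsN, PsN_succ, dif_pos p.1.isLt, Fin.eta]

lemma bpolExp_ne_zero {n d : ℕ} (a : Fin n → ℕ) (p : Fin n × Fin d) :
    bpolExp d a p ≠ 0 ↔ InS a p := by
  rw [bpolExp_apply]
  split <;> simp [*]

section Alg

variable {σ : Type*} [Fintype σ] {k : Type*} [Field k]

lemma monF_eq (a : σ → ℕ) :
    monF k a = MvPolynomial.monomial (Finsupp.equivFunOnFinite.symm a) (1 : k) := rfl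

lemma equivSymm_apply (a : σ → ℕ) (i : σ) :
    (Finsupp.equivFunOnFinite.symm a) i = a i := rfl

lemma equivSymm_add (a b : σ → ℕ) :
    Finsupp.equivFunOnFinite.symm (a + b) =
      Finsupp.equivFunOnFinite.symm a + Finsupp.equivFunOnFinite.symm b := by
  ext i; rfl

lemma monF_mul (a b : σ → ℕ) : monF k a * monF k b = monF k (a + b) := by
  rw [monF_eq, monF_eq, monF_eq, MvPolynomial.monomial_mul, one_mul, equivSymm_add]

lemma monF_ne_zero (a : σ → ℕ) : monF k a ≠ 0 := by
  intro h
  rw [monF_eq, MvPolynomial.monomial_eq_zero] at h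
  exact one_ne_zero h

lemma support_monF (a : σ → ℕ) :
    (monF k a).support = {Finsupp.equivFunOnFinite.symm a} := by
  rw [monF_eq, MvPolynomial.support_monomial, if_neg (one_ne_zero)]

/-- membership of a monomial in a monomial ideal -/
lemma monF_mem_span {A : Set (σ → ℕ)} {u : σ → ℕ} :
    monF k u ∈ Ideal.span ((monF k) '' A) ↔ ∃ a ∈ A, ∀ i, a i ≤ u i := by
  classical
  constructor
  · intro h
    have himg : (monF k) '' A =
        (fun s => MvPolynomial.monomial s (1:k)) '' (Finsupp.equivFunOnFinite.symm '' A) := by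
      rw [Set.image_image]; rfl
    rw [himg] at h
    have := MvPolynomial.mem_ideal_span_monomial_image.mp h
    have hu := this (Finsupp.equivFunOnFinite.symm u) (by rw [support_monF]; simp)
    obtain ⟨si, ⟨a, ha, rfl⟩, hle⟩ := hu
    exact ⟨a, ha, fun i => hle i⟩
  · rintro ⟨a, ha, hle⟩
    have : u = (u - a) + a := by
      funext i
      have := hle i
      simp only [Pi.add_apply, Pi.sub_apply]
      omega
    rw [this, ← monF_mul]
    exact Ideal.mul_mem_left _ _ (Ideal.subset_span ⟨a, ha, rfl⟩)

/-- membership of a monomial in the span of variables -/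
lemma monF_mem_varSpan {F : Set σ} {u : σ → ℕ} :
    monF k u ∈ Ideal.span (MvPolynomial.X '' F : Set (MvPolynomial σ k)) ↔
      ∃ i ∈ F, u i ≠ 0 := by
  rw [MvPolynomial.mem_ideal_span_X_image]
  constructor
  · intro h
    obtain ⟨i, hi, hne⟩ := h (Finsupp.equivFunOnFinite.symm u) (by rw [support_monF]; simp)
    exact ⟨i, hi, hne⟩
  · intro ⟨i, hi, hne⟩ m hm
    rw [support_monF] at hm
    simp only [Finset.mem_singleton] at hm
    subst hm
    exact ⟨i, hi, hne⟩

end Alg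


/-! ### arithmetic helpers on exponent vectors -/

lemma aN_eq {m : ℕ} (a : Fin m → ℕ) (j : ℕ) :
    (if h : j < m then a ⟨j, h⟩ else 0) = (if h : j < m then a ⟨j, h⟩ else 0) := rfl

lemma PsN_add_single {m : ℕ} (a : Fin m → ℕ) (i : Fin m) (y : ℕ) :
    PsN (a + Pi.single i 1) y = PsN a y + (if (i:ℕ) < y then 1 else 0) := by
  classical
  unfold PsN
  have hpt : ∀ j, (if h : j < m then (a + Pi.single i 1 : Fin m → ℕ) ⟨j, h⟩ else 0)
      = (if h : j < m then a ⟨j, h⟩ else 0) + (if j = (i:ℕ) then 1 else 0) := by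
    intro j
    by_cases hj : j < m
    · rw [dif_pos hj, dif_pos hj, Pi.add_apply, Pi.single_apply]
      congr 1
      by_cases he : (⟨j, hj⟩ : Fin m) = i
      · rw [if_pos he, if_pos (by rw [← he])]
      · rw [if_neg he, if_neg (by intro hc; exact he (Fin.ext hc))]
    · rw [dif_neg hj, dif_neg hj, if_neg (by intro hc; exact hj (hc ▸ i.isLt))]
  calc ∑ j ∈ Finset.range y, (if h : j < m then (a + Pi.single i 1 : Fin m → ℕ) ⟨j, h⟩ else 0)
      = ∑ j ∈ Finset.range y, ((if h : j < m then a ⟨j, h⟩ else 0) + (if j = (i:ℕ) then 1 else 0)) :=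
        Finset.sum_congr rfl (fun j _ => hpt j)
    _ = (∑ j ∈ Finset.range y, (if h : j < m then a ⟨j, h⟩ else 0))
          + ∑ j ∈ Finset.range y, (if j = (i:ℕ) then 1 else 0) := Finset.sum_add_distrib
    _ = _ := by
        have hsum : (∑ j ∈ Finset.range y, (if j = (i:ℕ) then (1:ℕ) else 0))
            = (if (i:ℕ) < y then (1:ℕ) else 0) := by
          rw [Finset.sum_ite_eq' (Finset.range y) (i:ℕ) (fun _ => 1)]
          by_cases hi : (i:ℕ) < y
          · rw [if_pos (Finset.mem_range.2 hi), if_pos hi]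
          · rw [if_neg (fun hc => hi (Finset.mem_range.1 hc)), if_neg hi]
        rw [hsum]

lemma sub_add_single {m : ℕ} (a : Fin m → ℕ) (i : Fin m) (h : 0 < a i) :
    (a - Pi.single i 1) + Pi.single i 1 = a := by
  funext y
  simp only [Pi.add_apply, Pi.sub_apply, Pi.single_apply]
  by_cases hy : y = i
  · subst hy; simp; omega
  · simp [hy]

lemma PsN_sub_single {m : ℕ} (a : Fin m → ℕ) (i : Fin m) (y : ℕ) (h : 0 < a i) :
    PsN (a - Pi.single i 1) y + (if (i:ℕ) < y then 1 else 0) = PsN a y := by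
  have := PsN_add_single (a - Pi.single i 1) i y
  rw [sub_add_single a i h] at this
  omega

lemma degV_eq_PsN {m : ℕ} (a : Fin m → ℕ) : degV a = PsN a m := (PsN_degV a).symm

lemma degV_sub_single {m : ℕ} (a : Fin m → ℕ) (i : Fin m) (h : 0 < a i) :
    degV (a - Pi.single i 1) = degV a - 1 := by
  have := PsN_sub_single a i m h
  rw [if_pos i.isLt] at this
  rw [degV_eq_PsN, degV_eq_PsN]
  omega

lemma PsN_eq_of_zero {m : ℕ} (a : Fin m → ℕ) {x y : ℕ} (hxy : x ≤ y)
    (h : ∀ j (hj : j < m), x ≤ j → j < y → a ⟨j, hj⟩ = 0) : PsN a y = PsN a x := by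
  induction y with
  | zero => cases Nat.le_zero.mp hxy; rfl
  | succ z ih =>
    rcases Nat.lt_or_ge x (z+1) with hx | hx
    · rw [PsN_succ, ih (by omega) (fun j hj h1 h2 => h j hj h1 (by omega))]
      by_cases hz : z < m
      · rw [dif_pos hz, h z hz (by omega) (by omega)]; omega
      · rw [dif_neg hz]; omega
    · have : x = z + 1 := by omega
      rw [this]

/-! ### closure properties of the set of monomials of `I` -/

section Mth

variable {n : ℕ} {k : Type*} [Field k] {I : Ideal (MvPolynomial (Fin n) k)}

lemma mem_up {a u : Fin n → ℕ} (h : monF k a ∈ I) (hle : ∀ i, a i ≤ u i) :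
    monF k u ∈ I := by
  have : u = (u - a) + a := by
    funext i
    simp only [Pi.add_apply, Pi.sub_apply]
    have := hle i; omega
  rw [this, ← monF_mul]
  exact Ideal.mul_mem_left _ _ h

lemma single_irrel {m : ℕ} (inst : DecidableEq (Fin m)) (i : Fin m) :
    @Pi.single (Fin m) (fun _ => ℕ) _ inst i 1 = Pi.single i 1 := by
  have : inst = instDecidableEqFin m := Subsingleton.elim _ _
  subst this
  rfl

lemma mem_minGens_iff {a : Fin n → ℕ} :
    a ∈ minGens I ↔ monF k a ∈ I ∧ ∀ i, 0 < a i → monF k (a - Pi.single i 1) ∉ I := by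
  simp only [minGens, Set.mem_setOf_eq]
  congr!


lemma descent : ∀ (N : ℕ) (a : Fin n → ℕ), degV a ≤ N → monF k a ∈ I →
    ∃ g ∈ minGens I, ∀ i, g i ≤ a i := by
  intro N
  induction N with
  | zero =>
    intro a hN h
    refine ⟨a, ⟨h, fun i hi => ?_⟩, fun i => le_refl _⟩
    exfalso
    have : a i ≤ degV a := Finset.single_le_sum (f := a) (fun _ _ => Nat.zero_le _)
      (Finset.mem_univ i)
    omega
  | succ N ih =>
    intro a hN h
    by_cases ha : a ∈ minGens I
    · exact ⟨a, ha, fun i => le_refl _⟩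
    · rw [mem_minGens_iff] at ha
      push_neg at ha
      obtain ⟨i, hi, hmem⟩ := ha h
      obtain ⟨g, hg, hle⟩ := ih (a - Pi.single i 1)
        (by rw [degV_sub_single a i hi]; omega) hmem
      refine ⟨g, hg, fun y => le_trans (hle y) ?_⟩
      simp only [Pi.sub_apply]
      omega

lemma descent' {a : Fin n → ℕ} (h : monF k a ∈ I) :
    ∃ g ∈ minGens I, ∀ i, g i ≤ a i := descent (degV a) a (le_refl _) h

lemma borelM (hss : StronglyStable I) {a : Fin n → ℕ} {i j : Fin n}
    (h : monF k a ∈ I) (hi : 0 < a i) (hj : j < i) :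
    monF k (a - Pi.single i 1 + Pi.single j 1) ∈ I := by
  obtain ⟨g, hg, hle⟩ := descent' h
  have hij : j ≠ i := ne_of_lt hj
  rcases Nat.lt_or_ge (g i) (a i) with hgi | hgi
  · apply mem_up (mem_minGens_iff.mp hg).1
    intro y
    simp only [Pi.add_apply, Pi.sub_apply, Pi.single_apply]
    rcases eq_or_ne y i with rfl | hyi
    · rw [if_pos rfl]
      split_ifs <;> omega
    · rw [if_neg hyi]
      have := hle y
      split_ifs <;> omega
  · have hgieq : g i = a i := le_antisymm (hle i) hgi
    have hgmem := hss.2 g hg i j hj (by omega)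
    apply mem_up hgmem
    intro y
    simp only [Pi.add_apply, Pi.sub_apply, Pi.single_apply]
    rcases eq_or_ne y i with rfl | hyi
    · split_ifs <;> omega
    · have := hle y
      split_ifs <;> omega

lemma PsN_exists_pos {m : ℕ} (a : Fin m → ℕ) {x y : ℕ} (h : PsN a x < PsN a y) :
    ∃ j : ℕ, ∃ hj : j < m, x ≤ j ∧ j < y ∧ 0 < a ⟨j, hj⟩ := by
  by_contra hc
  push_neg at hc
  have hxy : x ≤ y := by
    by_contra hxy
    exact absurd (PsN_mono a (le_of_not_ge hxy)) (by omega)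
  have := PsN_eq_of_zero a hxy (fun j hj h1 h2 => by
    have := hc j hj h1 h2; omega)
  omega

/-- Borel order closure: if `monF a ∈ I` and `b` dominates `a` in the Borel order
(same degree, partial sums of `b` everywhere at least those of `a`), then `monF b ∈ I`. -/
lemma borelOrder (hss : StronglyStable I) :
    ∀ (N : ℕ) (a b : Fin n → ℕ),
      (∑ x ∈ Finset.range n, (PsN b (x+1) - PsN a (x+1))) = N →
      monF k a ∈ I → degV a = degV b → (∀ x, PsN a x ≤ PsN b x) → monF k b ∈ I := by
  intro N
  induction N using Nat.strong_induction_on with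
  | _ N ih =>
    intro a b hN ha hdeg hle
    by_cases hab : ∀ x, PsN a (x+1) = PsN b (x+1)
    · have : a = b := by
        funext i
        have h1 := hab (i : ℕ)
        have h2 : PsN a (i:ℕ) = PsN b (i:ℕ) := by
          rcases Nat.eq_zero_or_pos (i:ℕ) with h0 | h0
          · rw [h0]; rfl
          · have := hab ((i:ℕ) - 1)
            have he : (i:ℕ) - 1 + 1 = (i:ℕ) := by omega
            rw [he] at this; exact this
        have h3 := PsN_succ a (i:ℕ)
        have h4 := PsN_succ b (i:ℕ)
        rw [dif_pos i.isLt] at h3 h4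
        simp only [Fin.eta] at h3 h4
        omega
      rwa [← this]
    · push_neg at hab
      have hex : ∃ x, PsN a (x+1) < PsN b (x+1) := by
        obtain ⟨x, hx⟩ := hab
        exact ⟨x, lt_of_le_of_ne (hle (x+1)) hx⟩
      set xm := Nat.find hex with hxm
      have hxm1 : PsN a (xm+1) < PsN b (xm+1) := Nat.find_spec hex
      have hxmlt : xm < n := by
        by_contra hc
        have h1 : PsN a (xm+1) = PsN a n := PsN_stable a (by omega)
        have h2 : PsN b (xm+1) = PsN b n := PsN_stable b (by omega)
        rw [degV_eq_PsN, degV_eq_PsN] at hdeg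
        omega
      have hxmin : ∀ y, y < xm → PsN a (y+1) = PsN b (y+1) := by
        intro y hy
        have := Nat.find_min hex hy
        have := hle (y+1)
        omega
      -- find the least positive entry above xm
      have hbig : PsN a (xm+1) < PsN a n := by
        rw [degV_eq_PsN, degV_eq_PsN] at hdeg
        have := PsN_mono b (show xm+1 ≤ n by omega)
        omega
      obtain ⟨u0, hu0m, hu0ge, _, hu0pos⟩ := PsN_exists_pos a hbig
      have hexu : ∃ u, (xm + 1 ≤ u ∧ ∃ (hu : u < n), 0 < a ⟨u, hu⟩) := ⟨u0, hu0ge, hu0m, hu0pos⟩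
      set um := Nat.find hexu with hum
      obtain ⟨humge, humlt, humpos⟩ := Nat.find_spec hexu
      have humin : ∀ v (hv : v < n), xm + 1 ≤ v → v < um → a ⟨v, hv⟩ = 0 := by
        intro v hv h1 h2
        have := Nat.find_min hexu h2
        push_neg at this
        have := this h1 hv
        omega
      -- the Borel move
      set i1 : Fin n := ⟨um, humlt⟩ with hi1
      set i2 : Fin n := ⟨xm, hxmlt⟩ with hi2
      have hlt : i2 < i1 := by rw [Fin.lt_def]; exact humge
      set a' := a - Pi.single i1 1 + Pi.single i2 1 with ha'
      have ha'mem : monF k a' ∈ I := borelM hss ha humpos hlt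
      -- partial sums of a'
      have hps : ∀ y, PsN a' y + (if um < y then 1 else 0) = PsN a y + (if xm < y then 1 else 0) := by
        intro y
        have h1 := PsN_add_single (a - Pi.single i1 1) i2 y
        have h2 := PsN_sub_single a i1 y humpos
        simp only [← ha'] at h1
        simp only [hi1, hi2] at h1 h2 ⊢
        omega
      have hdeg' : degV a' = degV a := by
        have := hps n
        rw [if_pos (by omega), if_pos (by omega)] at this
        rw [degV_eq_PsN, degV_eq_PsN]
        omega
      have hle' : ∀ y, PsN a y ≤ PsN a' y ∧ PsN a' y ≤ PsN b y := by
        intro y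
        have h0 := hps y
        rcases Nat.lt_or_ge xm y with hy1 | hy1
        · rcases Nat.lt_or_ge um y with hy2 | hy2
          · rw [if_pos hy2, if_pos hy1] at h0
            have := hle y
            omega
          · -- xm < y ≤ um : PsN a' y = PsN a y + 1
            rw [if_neg (by omega), if_pos hy1] at h0
            have hzero : PsN a y = PsN a (xm+1) := by
              apply PsN_eq_of_zero a (by omega)
              intro j hj hj1 hj2
              exact humin j hj hj1 (by omega)
            have := PsN_mono b (show xm + 1 ≤ y by omega)
            omega
        · rw [if_neg (by omega), if_neg (by omega)] at h0
          have := hle y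
          omega
      -- measure decreases
      have hterm : ∀ x, PsN b (x+1) - PsN a' (x+1) ≤ PsN b (x+1) - PsN a (x+1) := by
        intro x
        have := (hle' (x+1)).1
        omega
      have htermx : PsN b (xm+1) - PsN a' (xm+1) < PsN b (xm+1) - PsN a (xm+1) := by
        have h0 := hps (xm+1)
        rw [if_neg (by omega), if_pos (by omega)] at h0
        have := (hle' (xm+1)).2
        omega
      have hmes : (∑ x ∈ Finset.range n, (PsN b (x+1) - PsN a' (x+1))) < N := by
        rw [← hN]
        apply Finset.sum_lt_sum (fun x _ => hterm x)
        exact ⟨xm, Finset.mem_range.2 hxmlt, htermx⟩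
      exact ih _ hmes a' b rfl ha'mem (by rw [hdeg', hdeg]) (fun y => (hle' y).2)

/-- removing one unit from the largest variable present keeps us inside `S(a)`. -/
lemma InS_sub_max {d : ℕ} {a : Fin n → ℕ} {im : Fin n} (hpos : 0 < a im)
    (hmax : ∀ y : Fin n, (im : ℕ) < (y : ℕ) → a y = 0)
    {p : Fin n × Fin d} (h : InS (a - Pi.single im 1) p) : InS a p := by
  obtain ⟨h1, h2⟩ := h
  have hr := PsN_sub_single a im (p.1 : ℕ) hpos
  have hr1 := PsN_sub_single a im ((p.1 : ℕ) + 1) hpos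
  rcases Nat.lt_trichotomy ((p.1 : ℕ)) ((im : ℕ)) with hc | hc | hc
  · rw [if_neg (by omega)] at hr
    rw [if_neg (by omega)] at hr1
    exact ⟨by omega, by omega⟩
  · rw [if_neg (by omega)] at hr
    rw [if_pos (by omega)] at hr1
    exact ⟨by omega, by omega⟩
  · -- row above im is zero in a', contradiction
    exfalso
    have hz : (a - Pi.single im 1 : Fin n → ℕ) p.1 = 0 := by
      have := hmax p.1 hc
      simp only [Pi.sub_apply]
      omega
    have := PsN_succ (a - Pi.single im 1) (p.1 : ℕ)
    rw [dif_pos p.1.isLt] at this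
    simp only [Fin.eta, hz] at this
    omega

/-- A set meeting the polarization supports of all minimal generators meets the
polarization support of every monomial of `I`. -/
lemma coverM {d : ℕ} (hss : StronglyStable I) {F : Set (Fin n × Fin d)}
    (hcov : ∀ g ∈ minGens I, ∃ p ∈ F, InS g p) :
    ∀ (N : ℕ) (a : Fin n → ℕ), degV a ≤ N → monF k a ∈ I → ∃ p ∈ F, InS a p := by
  intro N
  induction N with
  | zero =>
    intro a hN ha
    apply hcov
    rw [mem_minGens_iff]
    refine ⟨ha, fun i hi => ?_⟩
    exfalso
    have : a i ≤ degV a := Finset.single_le_sum (f := a) (fun _ _ => Nat.zero_le _)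
      (Finset.mem_univ i)
    omega
  | succ N ih =>
    intro a hN ha
    by_cases hmin : a ∈ minGens I
    · exact hcov a hmin
    · rw [mem_minGens_iff] at hmin
      push_neg at hmin
      obtain ⟨i, hi, hisub⟩ := hmin ha
      -- largest variable present
      have hsne : (Finset.univ.filter (fun j : Fin n => 0 < a j)).Nonempty :=
        ⟨i, by simp [hi]⟩
      set im := (Finset.univ.filter (fun j : Fin n => 0 < a j)).max' hsne with him
      have himmem : 0 < a im := by
        have := Finset.max'_mem _ hsne
        simpa using this
      have hmax : ∀ y : Fin n, (im : ℕ) < (y : ℕ) → a y = 0 := by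
        intro y hy
        by_contra hc
        have hymem : y ∈ Finset.univ.filter (fun j : Fin n => 0 < a j) := by
          simp; omega
        have := Finset.le_max' _ y hymem
        rw [Fin.le_def] at this
        omega
      have hile : i ≤ im := by
        apply Finset.le_max'
        simp [hi]
      have hsubmem : monF k (a - Pi.single im 1) ∈ I := by
        rcases eq_or_lt_of_le hile with heq | hlt
        · rwa [← heq]
        · have hbm := borelM hss hisub (by
            simp only [Pi.sub_apply, Pi.single_apply]
            rw [if_neg (by exact fun hc => (ne_of_lt hlt) (by exact hc.symm ▸ rfl))]
            omega) hlt
          have : (a - Pi.single i 1) - Pi.single im 1 + Pi.single i 1 = a - Pi.single im 1 := by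
            funext y
            simp only [Pi.add_apply, Pi.sub_apply, Pi.single_apply]
            rcases eq_or_ne y i with rfl | hyi
            · have hyim : y ≠ im := ne_of_lt hlt
              split_ifs <;> omega
            · split_ifs <;> omega
          rwa [this] at hbm
      obtain ⟨p, hp, hins⟩ := ih (a - Pi.single im 1)
        (by rw [degV_sub_single a im himmem]; omega) hsubmem
      exact ⟨p, hp, InS_sub_max himmem hmax hins⟩

lemma coverM' {d : ℕ} (hss : StronglyStable I) {F : Set (Fin n × Fin d)}
    (hcov : ∀ g ∈ minGens I, ∃ p ∈ F, InS g p) {a : Fin n → ℕ} (ha : monF k a ∈ I) :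
    ∃ p ∈ F, InS a p := coverM hss hcov (degV a) a (le_refl _) ha

/-- The cap construction: if `F` is a cover and the witness monomial `a` meets `F`
exactly at `(i, τ)`, then for every row `x < i` there is `(x, t) ∈ F` with `t ≤ τ`. -/
lemma capLemma {d : ℕ} (hss : StronglyStable I) {F : Set (Fin n × Fin d)}
    (hcov : ∀ g ∈ minGens I, ∃ p ∈ F, InS g p)
    {a : Fin n → ℕ} (ha : monF k a ∈ I) {i : Fin n} {τ : Fin d}
    (hhit1 : PsN a (i:ℕ) ≤ (τ:ℕ)) (hhit2 : (τ:ℕ) < PsN a ((i:ℕ)+1))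
    (havoid : ∀ p ∈ F, InS a p → p = (i, τ))
    {x : ℕ} (hx : x < (i:ℕ)) :
    ∃ t : Fin d, (t:ℕ) ≤ (τ:ℕ) ∧ ((⟨x, lt_trans hx i.isLt⟩ : Fin n), t) ∈ F := by
  set τv := (τ:ℕ) with hτv
  set iv := (i:ℕ) with hiv
  have hxa : PsN a x ≤ τv := le_trans (PsN_mono a (le_of_lt hx)) hhit1
  set b : Fin n → ℕ := fun y => if (y:ℕ) < x then a y
    else if (y:ℕ) = x then τv + 1 - PsN a x
    else if (y:ℕ) < iv then 0
    else if (y:ℕ) = iv then PsN a (iv+1) - (τv+1)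
    else a y with hb
  have hbN : ∀ z (hz : z < n), b ⟨z, hz⟩ = (if z < x then a ⟨z, hz⟩
      else if z = x then τv + 1 - PsN a x
      else if z < iv then 0
      else if z = iv then PsN a (iv+1) - (τv+1)
      else a ⟨z, hz⟩) := fun z hz => rfl
  -- partial sums of b
  have hPb1 : ∀ y, y ≤ x → PsN b y = PsN a y := by
    intro y hy
    unfold PsN
    apply Finset.sum_congr rfl
    intro j hj
    rw [Finset.mem_range] at hj
    by_cases hjn : j < n
    · rw [dif_pos hjn, dif_pos hjn, hbN j hjn, if_pos (by omega)]
    · rw [dif_neg hjn, dif_neg hjn]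
  have hPbx : PsN b (x+1) = τv + 1 := by
    rw [PsN_succ, hPb1 x (le_refl _)]
    have hxn : x < n := lt_trans hx i.isLt
    rw [dif_pos hxn, hbN x hxn, if_neg (by omega), if_pos rfl]
    omega
  have hPb2 : ∀ y, x < y → y ≤ iv → PsN b y = τv + 1 := by
    intro y h1 h2
    have : PsN b y = PsN b (x+1) := by
      apply PsN_eq_of_zero b (by omega)
      intro j hj hj1 hj2
      rw [hbN j hj, if_neg (by omega), if_neg (by omega), if_pos (by omega)]
    rw [this, hPbx]
  have hPb3 : ∀ y, iv < y → PsN b y = PsN a y := by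
    intro y
    induction y with
    | zero => omega
    | succ z ih =>
      intro hz
      rcases Nat.lt_or_ge iv z with h2 | h2
      · rw [PsN_succ b, PsN_succ a, ih h2]
        congr 1
        by_cases hzn : z < n
        · rw [dif_pos hzn, dif_pos hzn, hbN z hzn,
            if_neg (by omega), if_neg (by omega), if_neg (by omega), if_neg (by omega)]
        · rw [dif_neg hzn, dif_neg hzn]
      · have hze : z = iv := by omega
        rw [hze]
        rw [PsN_succ b, PsN_succ a, hPb2 iv (by omega) (le_refl _), dif_pos i.isLt,
          dif_pos i.isLt]
        have hii : (⟨iv, i.isLt⟩ : Fin n) = i := Fin.ext rfl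
        rw [hii]
        have hbi : b i = PsN a (iv+1) - (τv+1) := by
          have h0 := hbN iv i.isLt
          rw [hii] at h0
          rw [h0, if_neg (by omega), if_neg (by omega), if_neg (by omega), if_pos rfl]
        rw [hbi]
        have hs := PsN_succ a iv
        rw [dif_pos i.isLt, hii] at hs
        omega
  have hdegb : degV a = degV b := by
    rw [degV_eq_PsN, degV_eq_PsN, hPb3 n i.isLt]
  have hle : ∀ y, PsN a y ≤ PsN b y := by
    intro y
    rcases le_or_gt y x with h1 | h1
    · rw [hPb1 y h1]
    · rcases le_or_gt y iv with h2 | h2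
      · rw [hPb2 y h1 h2]
        calc PsN a y ≤ PsN a iv := PsN_mono a h2
          _ ≤ τv := hhit1
          _ ≤ τv + 1 := by omega
      · rw [hPb3 y h2]
  have hbmem : monF k b ∈ I := borelOrder hss _ a b rfl ha hdegb hle
  obtain ⟨p, hpF, hins⟩ := coverM' hss hcov hbmem
  obtain ⟨hins1, hins2⟩ := hins
  set rv := (p.1 : ℕ) with hrv
  set tv := (p.2 : ℕ) with htv
  rcases Nat.lt_trichotomy rv x with hc | hc | hc
  · exfalso
    rw [hPb1 rv (by omega)] at hins1
    rw [hPb1 (rv+1) (by omega)] at hins2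
    have hq := havoid p hpF ⟨hins1, hins2⟩
    have hp1 : (p.1 : ℕ) = (i:ℕ) := by rw [hq]
    omega
  · refine ⟨p.2, ?_, ?_⟩
    · rw [hPb2 (rv+1) (by omega) (by omega)] at hins2
      omega
    · have hp1 : p.1 = (⟨x, lt_trans hx i.isLt⟩ : Fin n) := Fin.ext hc
      have : p = ((⟨x, lt_trans hx i.isLt⟩ : Fin n), p.2) := Prod.ext hp1 rfl
      rwa [this] at hpF
  · rcases Nat.lt_trichotomy rv iv with hd2 | hd2 | hd2
    · exfalso
      rw [hPb2 rv (by omega) (by omega)] at hins1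
      rw [hPb2 (rv+1) (by omega) (by omega)] at hins2
      omega
    · exfalso
      rw [hPb2 rv (by omega) (by omega)] at hins1
      rw [hPb3 (rv+1) (by omega)] at hins2
      have hp1 : p.1 = i := Fin.ext hd2
      have hins1' : PsN a rv ≤ tv := by
        have : PsN a rv ≤ τv := by rw [hd2]; exact hhit1
        omega
      have hq := havoid p hpF ⟨hins1', hins2⟩
      have hp2 : (p.2 : ℕ) = (τ:ℕ) := by rw [hq]
      omega
    · exfalso
      rw [hPb3 rv (by omega)] at hins1
      rw [hPb3 (rv+1) (by omega)] at hins2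
      have hq := havoid p hpF ⟨hins1, hins2⟩
      have hp1 : (p.1 : ℕ) = (i:ℕ) := by rw [hq]
      omega

end Mth

/-! ### structure of minimal covers -/

lemma natInterval' (S : Finset ℕ) (l : ℕ) (h1 : ∀ x ∈ S, l ≤ x)
    (h2 : ∀ x ∈ S, ∀ y, l ≤ y → y ≤ x → y ∈ S) : S = Finset.Ico l (l + S.card) := by
  have hsub : S ⊆ Finset.Ico l (l + S.card) := by
    intro x hx
    rw [Finset.mem_Ico]
    refine ⟨h1 x hx, ?_⟩
    have hicc : Finset.Icc l x ⊆ S := by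
      intro y hy
      rw [Finset.mem_Icc] at hy
      exact h2 x hx y hy.1 hy.2
    have := Finset.card_le_card hicc
    rw [Nat.card_Icc] at this
    have := h1 x hx
    omega
  apply Finset.eq_of_subset_of_card_le hsub
  rw [Nat.card_Ico]
  omega

section Struct

variable {n d : ℕ} {k : Type*} [Field k] {I : Ideal (MvPolynomial (Fin n) k)}

/-- `F` meets the polarization support of every minimal generator. -/
def CoverG (I : Ideal (MvPolynomial (Fin n) k)) (F : Set (Fin n × Fin d)) : Prop :=
  ∀ g ∈ minGens I, ∃ p ∈ F, InS g p

/-- `F` is a minimal cover. -/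
def MinCov (I : Ideal (MvPolynomial (Fin n) k)) (F : Set (Fin n × Fin d)) : Prop :=
  CoverG I F ∧ ∀ F' ⊆ F, CoverG I F' → F' = F

/-- number of elements of `F` in columns `< τ`. -/
def pF (F : Set (Fin n × Fin d)) (τ : ℕ) : ℕ :=
  (Finset.univ.filter (fun q : Fin n × Fin d => q ∈ F ∧ (q.2:ℕ) < τ)).card

/-- the elements of `F` in column `t`. -/
def colF (F : Set (Fin n × Fin d)) (t : Fin d) : Finset (Fin n) :=
  Finset.univ.filter (fun s => (s, t) ∈ F)

lemma pF_zero (F : Set (Fin n × Fin d)) : pF F 0 = 0 := by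
  unfold pF
  rw [Finset.card_eq_zero]
  apply Finset.filter_eq_empty_iff.2
  intro q _
  simp

lemma pF_mono (F : Set (Fin n × Fin d)) {τ τ' : ℕ} (h : τ ≤ τ') : pF F τ ≤ pF F τ' := by
  apply Finset.card_le_card
  intro q hq
  simp only [Finset.mem_filter] at hq ⊢
  exact ⟨hq.1, hq.2.1, by omega⟩

lemma pF_succ (F : Set (Fin n × Fin d)) (t : Fin d) :
    pF F ((t:ℕ)+1) = pF F (t:ℕ) + (colF F t).card := by
  unfold pF
  have hsplit : Finset.univ.filter (fun q : Fin n × Fin d => q ∈ F ∧ (q.2:ℕ) < (t:ℕ)+1)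
      = (Finset.univ.filter (fun q : Fin n × Fin d => q ∈ F ∧ (q.2:ℕ) < (t:ℕ)))
        ∪ (Finset.univ.filter (fun q : Fin n × Fin d => q ∈ F ∧ q.2 = t)) := by
    ext q
    simp only [Finset.mem_filter, Finset.mem_union, Finset.mem_univ, true_and]
    constructor
    · rintro ⟨hqF, hlt⟩
      rcases Nat.lt_or_ge (q.2 : ℕ) (t:ℕ) with h | h
      · exact Or.inl ⟨hqF, h⟩
      · exact Or.inr ⟨hqF, Fin.ext (by omega)⟩
    · rintro (⟨hqF, hlt⟩ | ⟨hqF, heq⟩)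
      · exact ⟨hqF, by omega⟩
      · exact ⟨hqF, by rw [heq]; omega⟩
  rw [hsplit, Finset.card_union_of_disjoint]
  · congr 1
    apply Finset.card_bij (fun q _ => q.1)
    · intro q hq
      simp only [Finset.mem_filter, Finset.mem_univ, true_and] at hq
      simp only [colF, Finset.mem_filter, Finset.mem_univ, true_and]
      have : q = (q.1, t) := Prod.ext rfl hq.2
      rw [← this]
      exact hq.1
    · intro q hq q' hq' heq
      simp only [Finset.mem_filter, Finset.mem_univ, true_and] at hq hq'
      have : q.2 = q'.2 := by rw [hq.2, hq'.2]
      exact Prod.ext heq this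
    · intro s hs
      simp only [colF, Finset.mem_filter, Finset.mem_univ, true_and] at hs
      exact ⟨(s, t), by simp [hs], rfl⟩
  · rw [Finset.disjoint_filter]
    rintro q _ ⟨_, hlt⟩ ⟨_, heq⟩
    rw [heq] at hlt
    omega

theorem structthm (hss : StronglyStable I) {F : Set (Fin n × Fin d)} (hmc : MinCov I F) :
    ∀ (t : Fin d) (s : Fin n),
      ((s, t) ∈ F ↔ pF F (t:ℕ) ≤ (s:ℕ) ∧ (s:ℕ) < pF F ((t:ℕ)+1)) := by
  -- witness extraction
  have hwit : ∀ (x : Fin n) (t : Fin d), (x, t) ∈ F → ∃ a : Fin n → ℕ, monF k a ∈ I ∧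
      (∀ p ∈ F, InS a p → p = (x, t)) ∧ PsN a (x:ℕ) ≤ (t:ℕ) ∧ (t:ℕ) < PsN a ((x:ℕ)+1) := by
    intro x t hxF
    have hne : ¬ CoverG I (F \ {(x,t)}) := by
      intro hc
      have heq := hmc.2 _ Set.diff_subset hc
      have : (x,t) ∈ F \ {(x,t)} := heq.symm ▸ hxF
      simp at this
    unfold CoverG at hne
    push_neg at hne
    obtain ⟨g, hg, hgavoid⟩ := hne
    obtain ⟨p, hp, hins⟩ := hmc.1 g hg
    have hpx : p = (x,t) := by
      by_contra hpc
      exact hgavoid p ⟨hp, by simp [hpc]⟩ hins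
    refine ⟨g, (mem_minGens_iff.mp hg).1, ?_, ?_, ?_⟩
    · intro q hq hinsq
      by_contra hqc
      exact hgavoid q ⟨hq, by simp [hqc]⟩ hinsq
    · rw [hpx] at hins; exact hins.1
    · rw [hpx] at hins; exact hins.2
  -- main induction on columns
  have main : ∀ (τ : ℕ) (t : Fin d), (t:ℕ) < τ → ∀ s : Fin n,
      ((s, t) ∈ F ↔ pF F (t:ℕ) ≤ (s:ℕ) ∧ (s:ℕ) < pF F ((t:ℕ)+1)) := by
    intro τ
    induction τ with
    | zero => intro t ht; omega
    | succ τ ihτ =>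
      intro t ht s
      rcases Nat.lt_or_ge (t:ℕ) τ with hlt | hge
      · exact ihτ t hlt s
      · have htτ : (t:ℕ) = τ := by omega
        -- Step A: every row in column t is ≥ pF F τ, and fills downward
        have stepA : ∀ x : Fin n, (x, t) ∈ F →
            pF F τ ≤ (x:ℕ) ∧ ∀ y, pF F τ ≤ y → y < (x:ℕ) →
              ∃ hy : y < n, ((⟨y, hy⟩ : Fin n), t) ∈ F := by
          intro x hxF
          obtain ⟨a, haI, havoid, hhit1, hhit2⟩ := hwit x t hxF
          -- the chain bound
          have hchain : ∀ u, u ≤ (t:ℕ) → PsN a (pF F u) ≤ u := by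
            intro u
            induction u with
            | zero => intro _; rw [pF_zero]; exact le_refl _
            | succ v ihv =>
              intro hv
              rcases Nat.lt_or_ge v (PsN a n) with hva | hva
              · obtain ⟨ℓ, hℓn, hℓ1, hℓ2⟩ := letterEx a hva
                have hih := ihv (by omega)
                have hℓge : pF F v ≤ ℓ := by
                  by_contra hcc
                  have : PsN a (ℓ+1) ≤ PsN a (pF F v) := PsN_mono a (by omega)
                  omega
                have hvd : v < d := by
                  have := t.isLt
                  omega
                have hnotF : ((⟨ℓ, hℓn⟩ : Fin n), (⟨v, hvd⟩ : Fin d)) ∉ F := by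
                  intro hcF
                  have hq := havoid _ hcF ⟨hℓ1, hℓ2⟩
                  have hq2 : ((⟨v, hvd⟩ : Fin d)) = t := congrArg Prod.snd hq
                  have : v = (t:ℕ) := by rw [← hq2]
                  omega
                have hℓge2 : pF F (v+1) ≤ ℓ := by
                  by_contra hcc
                  have hmem := (ihτ (⟨v, hvd⟩ : Fin d) (show v < τ by omega)
                    (⟨ℓ, hℓn⟩ : Fin n)).mpr (by
                      constructor
                      · show pF F v ≤ ℓ
                        exact hℓge
                      · show ℓ < pF F (v+1)
                        omega)
                  exact hnotF hmem
                calc PsN a (pF F (v+1)) ≤ PsN a ℓ := PsN_mono a hℓge2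
                  _ ≤ v := hℓ1
                  _ ≤ v + 1 := by omega
              · have h1 : PsN a (pF F (v+1)) ≤ PsN a n := by
                  rcases le_or_gt (pF F (v+1)) n with h | h
                  · exact PsN_mono a h
                  · rw [PsN_stable a (le_of_lt h)]
                omega
          constructor
          · -- pF F τ ≤ x
            have hc := hchain τ (le_of_eq htτ.symm)
            by_contra hcc
            have h2 : PsN a ((x:ℕ)+1) ≤ PsN a (pF F τ) := PsN_mono a (by omega)
            omega
          · -- downward fill via the cap lemma
            intro y hy1 hy2
            have hyn : y < n := lt_trans hy2 x.isLt
            obtain ⟨t', ht'le, ht'F⟩ := capLemma hss hmc.1 haI hhit1 hhit2 havoid hy2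
            refine ⟨hyn, ?_⟩
            rcases Nat.lt_or_ge (t':ℕ) (t:ℕ) with hcase | hcase
            · exfalso
              have hmem := (ihτ t' (by omega) (⟨y, hyn⟩ : Fin n)).mp ht'F
              have hval : ((⟨y, hyn⟩ : Fin n) : ℕ) = y := rfl
              have : pF F ((t':ℕ)+1) ≤ pF F τ := pF_mono F (by omega)
              omega
            · have : t' = t := Fin.ext (by omega)
              rwa [this] at ht'F
        -- Step B: assemble the column into an interval
        have hcolS : (colF F t).image Fin.val
            = Finset.Ico (pF F τ) (pF F τ + ((colF F t).image Fin.val).card) := by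
          apply natInterval'
          · intro z hz
            simp only [Finset.mem_image, colF, Finset.mem_filter, Finset.mem_univ,
              true_and] at hz
            obtain ⟨x, hxF, rfl⟩ := hz
            exact (stepA x hxF).1
          · intro z hz y hy1 hy2
            simp only [Finset.mem_image, colF, Finset.mem_filter, Finset.mem_univ,
              true_and] at hz ⊢
            obtain ⟨x, hxF, rfl⟩ := hz
            rcases Nat.lt_or_ge y (x:ℕ) with hyx | hyx
            · obtain ⟨hyn, hmem⟩ := (stepA x hxF).2 y hy1 hyx
              exact ⟨⟨y, hyn⟩, hmem, rfl⟩
            · have : y = (x:ℕ) := by omega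
              exact ⟨x, hxF, this.symm⟩
        have hcard : ((colF F t).image Fin.val).card = (colF F t).card :=
          Finset.card_image_of_injective _ Fin.val_injective
        have hsucc := pF_succ F t
        rw [htτ] at hsucc
        constructor
        · intro hsF
          have : (s:ℕ) ∈ (colF F t).image Fin.val := by
            apply Finset.mem_image_of_mem
            simp only [colF, Finset.mem_filter, Finset.mem_univ, true_and]
            exact hsF
          rw [hcolS, Finset.mem_Ico, hcard] at this
          rw [htτ]
          omega
        · intro ⟨h1, h2⟩
          rw [htτ] at h1 h2
          have : (s:ℕ) ∈ (colF F t).image Fin.val := by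
            rw [hcolS, Finset.mem_Ico, hcard]
            omega
          simp only [Finset.mem_image, colF, Finset.mem_filter, Finset.mem_univ,
            true_and] at this
          obtain ⟨x, hxF, hxv⟩ := this
          have : x = s := Fin.ext hxv
          rwa [this] at hxF
  intro t s
  exact main ((t:ℕ)+1) t (by omega) s

end Struct

/-! ### staircase vectors -/

lemma PsN_le_of_le {m : ℕ} {a b : Fin m → ℕ} (h : ∀ i, a i ≤ b i) (u : ℕ) :
    PsN a u ≤ PsN b u := by
  unfold PsN
  apply Finset.sum_le_sum
  intro j _
  by_cases hj : j < m
  · rw [dif_pos hj, dif_pos hj]; exact h _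
  · rw [dif_neg hj, dif_neg hj]

lemma PsN_le_dim {m : ℕ} (a : Fin m → ℕ) (u : ℕ) : PsN a u ≤ PsN a m := by
  rcases le_or_gt u m with h | h
  · exact PsN_mono a h
  · rw [PsN_stable a (le_of_lt h)]

lemma PsN_diffvec {d : ℕ} (f : ℕ → ℕ) (hf : Monotone f) (h0 : f 0 = 0) :
    ∀ u, u ≤ d → PsN (fun t : Fin d => f ((t:ℕ)+1) - f (t:ℕ)) u = f u := by
  intro u
  induction u with
  | zero => intro _; rw [PsN_zero, h0]
  | succ v ih =>
    intro hv
    rw [PsN_succ, ih (by omega), dif_pos (show v < d by omega)]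
    show f v + (f (v+1) - f v) = f (v+1)
    have := hf (show v ≤ v + 1 by omega)
    omega

section Vec

variable {n d : ℕ} {k : Type*} [Field k] {I : Ideal (MvPolynomial (Fin n) k)}

/-- the column-multiplicity vector of a subset of the grid. -/
def vecF (F : Set (Fin n × Fin d)) : Fin d → ℕ := fun t => pF F ((t:ℕ)+1) - pF F (t:ℕ)

/-- the staircase set of a vector `b` of column multiplicities. -/
def Tset (b : Fin d → ℕ) : Set (Fin n × Fin d) :=
  {p | PsN b (p.2:ℕ) ≤ (p.1:ℕ) ∧ (p.1:ℕ) < PsN b ((p.2:ℕ)+1)}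

lemma PsN_vecF (F : Set (Fin n × Fin d)) : ∀ u, u ≤ d → PsN (vecF F) u = pF F u :=
  PsN_diffvec (pF F) (fun _ _ h => pF_mono F h) (pF_zero F)

lemma degV_vecF (F : Set (Fin n × Fin d)) : degV (vecF F) = pF F d := by
  rw [degV_eq_PsN, PsN_vecF F d (le_refl _)]

lemma memF_iff_Tset (hss : StronglyStable I) {F : Set (Fin n × Fin d)} (hmc : MinCov I F) :
    F = Tset (vecF F) := by
  ext p
  have hst := structthm hss hmc p.2 p.1
  rw [Prod.mk.eta] at hst
  simp only [Tset, Set.mem_setOf_eq]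
  rw [hst, PsN_vecF F (p.2:ℕ) (le_of_lt p.2.isLt), PsN_vecF F ((p.2:ℕ)+1) p.2.isLt]

lemma pF_card_le_n (hss : StronglyStable I) {F : Set (Fin n × Fin d)} (hmc : MinCov I F) :
    pF F d ≤ n := by
  unfold pF
  have hinj : ∀ q ∈ Finset.univ.filter (fun q : Fin n × Fin d => q ∈ F ∧ (q.2:ℕ) < d),
      ∀ q' ∈ Finset.univ.filter (fun q : Fin n × Fin d => q ∈ F ∧ (q.2:ℕ) < d),
      q.1 = q'.1 → q = q' := by
    intro q hq q' hq' heq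
    simp only [Finset.mem_filter, Finset.mem_univ, true_and] at hq hq'
    have h1 := (structthm hss hmc q.2 q.1).mp (by rw [Prod.mk.eta]; exact hq.1)
    have h2 := (structthm hss hmc q'.2 q'.1).mp (by rw [Prod.mk.eta]; exact hq'.1)
    have hval : (q.1 : ℕ) = (q'.1 : ℕ) := by rw [heq]
    have ht : q.2 = q'.2 := by
      apply Fin.ext
      rcases Nat.lt_trichotomy (q.2:ℕ) (q'.2:ℕ) with hc | hc | hc
      · exfalso
        have := pF_mono F (show (q.2:ℕ)+1 ≤ (q'.2:ℕ) by omega)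
        omega
      · exact hc
      · exfalso
        have := pF_mono F (show (q'.2:ℕ)+1 ≤ (q.2:ℕ) by omega)
        omega
    exact Prod.ext heq ht
  calc (Finset.univ.filter (fun q : Fin n × Fin d => q ∈ F ∧ (q.2:ℕ) < d)).card
      ≤ (Finset.univ : Finset (Fin n)).card :=
        Finset.card_le_card_of_injOn Prod.fst (fun _ _ => Finset.mem_univ _) hinj
    _ = n := by rw [Finset.card_univ, Fintype.card_fin]

/-- vector of any subset of a staircase is dominated by the staircase vector. -/
lemma vecF_le_of_subset {F' : Set (Fin n × Fin d)} {b : Fin d → ℕ} (hsub : F' ⊆ Tset b)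
    (t : Fin d) : vecF F' t ≤ b t := by
  have hv : vecF F' t = (colF F' t).card := by
    unfold vecF
    rw [pF_succ]
    omega
  rw [hv]
  have hbt : b t = PsN b ((t:ℕ)+1) - PsN b (t:ℕ) := by
    rw [PsN_succ, dif_pos t.isLt, Fin.eta]
    omega
  calc (colF F' t).card = ((colF F' t).image Fin.val).card :=
        (Finset.card_image_of_injective _ Fin.val_injective).symm
    _ ≤ (Finset.Ico (PsN b (t:ℕ)) (PsN b ((t:ℕ)+1))).card := by
        apply Finset.card_le_card
        intro z hz
        simp only [Finset.mem_image, colF, Finset.mem_filter, Finset.mem_univ,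
          true_and] at hz
        obtain ⟨x, hxF, rfl⟩ := hz
        have := hsub hxF
        simp only [Tset, Set.mem_setOf_eq] at this
        rw [Finset.mem_Ico]
        exact this
    _ = PsN b ((t:ℕ)+1) - PsN b (t:ℕ) := Nat.card_Ico _ _
    _ = b t := hbt.symm

/-- every cover contains a minimal cover. -/
lemma exists_minCov : ∀ (N : ℕ) (F : Set (Fin n × Fin d)), F.ncard ≤ N →
    CoverG I F → ∃ F' ⊆ F, MinCov I F' := by
  intro N
  induction N using Nat.strong_induction_on with
  | _ N ih =>
    intro F hN hcov
    by_cases hm : ∀ F' ⊆ F, CoverG I F' → F' = F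
    · exact ⟨F, subset_rfl, hcov, hm⟩
    · push_neg at hm
      obtain ⟨F', hsub, hcov', hne⟩ := hm
      have hlt : F'.ncard < F.ncard :=
        Set.ncard_lt_ncard (ssubset_of_subset_of_ne hsub hne) (Set.toFinite F)
      obtain ⟨F'', h1, h2⟩ := ih F'.ncard (by omega) F' (le_refl _) hcov'
      exact ⟨F'', subset_trans h1 hsub, h2⟩

/-- Monotonicity: lowering a staircase preserves the covering property. -/
lemma MONvec {b' b : Fin d → ℕ} (hcov : CoverG I (Tset b'))
    (hdeg : PsN b' d ≤ PsN b d) (hn : PsN b d ≤ n) (hp : ∀ u, PsN b' u ≤ PsN b u) :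
    CoverG I (Tset b) := by
  -- descent auxiliary
  have descent : ∀ (g : Fin n → ℕ) (s : ℕ), s < PsN b d →
      (∃ u, PsN b u ≤ s ∧ s < PsN b (u+1) ∧ u < PsN g (s+1)) →
      ∃ s' u', ∃ (hs' : s' < n) (hu' : u' < d),
        PsN b u' ≤ s' ∧ s' < PsN b (u'+1) ∧ PsN g s' ≤ u' ∧ u' < PsN g (s'+1) := by
    intro g s
    induction s using Nat.strong_induction_on with
    | _ s ihs =>
      intro hs ⟨u, hu1, hu2, hu3⟩
      have hud : u < d := by
        by_contra hc
        rw [PsN_stable b (by omega)] at hu1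
        omega
      have hsn : s < n := by omega
      have hgn : u < PsN g n := by
        calc u < PsN g (s+1) := hu3
          _ ≤ PsN g n := PsN_le_dim g _
      obtain ⟨ℓ, hℓn, hℓ1, hℓ2⟩ := letterEx g hgn
      have hℓs : ℓ ≤ s := letter_le g hℓ1 hu3
      rcases eq_or_lt_of_le hℓs with heq | hlt
      · subst heq
        exact ⟨ℓ, u, hℓn, hud, hu1, hu2, hℓ1, hℓ2⟩
      · have hℓb : ℓ < PsN b d := by omega
        obtain ⟨u₂, hu₂d, hu₂1, hu₂2⟩ := letterEx b hℓb
        apply ihs ℓ hlt hℓb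
        refine ⟨u₂, hu₂1, hu₂2, ?_⟩
        have hu₂u : u₂ ≤ u := letter_le b hu₂1 (by omega)
        omega
  intro g hg
  obtain ⟨p, hpT, hpS⟩ := hcov g hg
  simp only [Tset, Set.mem_setOf_eq] at hpT
  obtain ⟨hins1, hins2⟩ := hpS
  have hsb : (p.1:ℕ) < PsN b d := by
    calc (p.1:ℕ) < PsN b' ((p.2:ℕ)+1) := hpT.2
      _ ≤ PsN b' d := PsN_le_dim b' _
      _ ≤ PsN b d := hdeg
  obtain ⟨s', u', hs', hu', h1, h2, h3, h4⟩ := descent g (p.1:ℕ) hsb (by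
    obtain ⟨u₀, hu₀d, hu₀1, hu₀2⟩ := letterEx b hsb
    refine ⟨u₀, hu₀1, hu₀2, ?_⟩
    have : u₀ ≤ (p.2:ℕ) := letter_le b hu₀1 (lt_of_lt_of_le hpT.2 (hp _))
    omega)
  refine ⟨((⟨s', hs'⟩ : Fin n), (⟨u', hu'⟩ : Fin d)), ?_, ?_⟩
  · simp only [Tset, Set.mem_setOf_eq]
    exact ⟨h1, h2⟩
  · exact ⟨h3, h4⟩

end Vec

section Final

variable {n d : ℕ} {k : Type*} [Field k]

/-- the exponent vectors of the minimal generators of the dual ideal -/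
def Bset (d : ℕ) (I : Ideal (MvPolynomial (Fin n) k)) : Set (Fin d → ℕ) :=
  {b | ∃ F : Set (Fin n × Fin d), MinCov I F ∧ b = vecF F}

/-- the dual ideal -/
def Istar (d : ℕ) (I : Ideal (MvPolynomial (Fin n) k)) : Ideal (MvPolynomial (Fin d) k) :=
  Ideal.span ((monF k) '' (Bset d I))

variable {I : Ideal (MvPolynomial (Fin n) k)}

lemma Bset_cover (hss : StronglyStable I) {b : Fin d → ℕ} (hb : b ∈ Bset d I) :
    CoverG I (Tset b) ∧ PsN b d ≤ n := by
  obtain ⟨F, hmc, rfl⟩ := hb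
  constructor
  · rw [← memF_iff_Tset hss hmc]
    exact hmc.1
  · rw [PsN_vecF F d (le_refl _)]
    exact pF_card_le_n hss hmc

lemma Bset_antichain (hss : StronglyStable I) :
    ∀ b1 ∈ Bset d I, ∀ b2 ∈ Bset d I, (∀ t, b1 t ≤ b2 t) → b1 = b2 := by
  rintro b1 ⟨F1, hmc1, rfl⟩ b2 ⟨F2, hmc2, rfl⟩ hle
  have hT1 : F1 = Tset (vecF F1) := memF_iff_Tset hss hmc1
  have hT2 : F2 = Tset (vecF F2) := memF_iff_Tset hss hmc2
  have hps : ∀ u, PsN (vecF F1) u ≤ PsN (vecF F2) u := fun u => PsN_le_of_le hle u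
  set m1 := PsN (vecF F1) d with hm1
  have hm1n : m1 ≤ n := by
    rw [hm1, PsN_vecF F1 d (le_refl _)]
    exact pF_card_le_n hss hmc1
  set f : ℕ → ℕ := fun u => min (PsN (vecF F2) u) m1 with hf
  set b3 : Fin d → ℕ := fun t => f ((t:ℕ)+1) - f (t:ℕ) with hb3
  have hfmono : Monotone f := fun x y hxy => by
    simp only [hf]
    exact min_le_min (PsN_mono _ hxy) (le_refl _)
  have hf0 : f 0 = 0 := by simp [hf, PsN_zero]
  have hPsb3 : ∀ u, u ≤ d → PsN b3 u = f u := PsN_diffvec f hfmono hf0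
  have hfd : f d = m1 := by
    have := hps d
    simp only [hf]
    omega
  have hb3d : PsN b3 d = m1 := by rw [hPsb3 d (le_refl _), hfd]
  have hcov3 : CoverG I (Tset b3) := by
    apply MONvec (b' := vecF F1)
    · rw [← hT1]; exact hmc1.1
    · rw [hb3d]
    · rw [hb3d]; exact hm1n
    · intro u
      rcases le_or_gt u d with hu | hu
      · rw [hPsb3 u hu]
        have h1 := hps u
        have h2 : PsN (vecF F1) u ≤ m1 := PsN_le_dim _ _
        simp only [hf]
        omega
      · rw [PsN_stable b3 (by omega), PsN_stable (vecF F1) (by omega), hb3d]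
  have hsub3 : Tset b3 ⊆ F2 := by
    intro p hp
    simp only [Tset, Set.mem_setOf_eq] at hp
    rw [hT2]
    simp only [Tset, Set.mem_setOf_eq]
    have hu1 : PsN b3 (p.2:ℕ) = f (p.2:ℕ) := hPsb3 _ (le_of_lt p.2.isLt)
    have hu2 : PsN b3 ((p.2:ℕ)+1) = f ((p.2:ℕ)+1) := hPsb3 _ p.2.isLt
    simp only [hf] at hu1 hu2
    omega
  have heqF : Tset b3 = F2 := hmc2.2 _ hsub3 hcov3
  have hb2le : ∀ t, vecF F2 t ≤ b3 t := by
    intro t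
    apply vecF_le_of_subset (b := b3) _ t
    rw [heqF]
  have hdeg2 : degV (vecF F2) ≤ m1 := by
    calc degV (vecF F2) ≤ degV b3 := Finset.sum_le_sum (fun t _ => hb2le t)
      _ = m1 := by rw [degV_eq_PsN, hb3d]
  have hdeg1 : m1 ≤ degV (vecF F2) := by
    rw [hm1, ← degV_eq_PsN, degV_eq_PsN (vecF F1), degV_eq_PsN (vecF F2)]
    exact hps d
  funext t
  by_contra hne
  have hlt : vecF F1 t < vecF F2 t := lt_of_le_of_ne (hle t) hne
  have hstrict : degV (vecF F1) < degV (vecF F2) := by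
    unfold degV
    exact Finset.sum_lt_sum (fun i _ => hle i) ⟨t, Finset.mem_univ t, hlt⟩
  rw [degV_eq_PsN (vecF F1), ← hm1] at hstrict
  omega

lemma minGens_Istar (hss : StronglyStable I) : minGens (Istar d I) = Bset d I := by
  ext u
  rw [mem_minGens_iff]
  constructor
  · rintro ⟨hu, hmin⟩
    obtain ⟨b, hbB, hble⟩ := monF_mem_span.mp hu
    rcases eq_or_ne b u with rfl | hne
    · exact hbB
    · exfalso
      have hex : ∃ t, b t < u t := by
        by_contra hc
        push_neg at hc
        exact hne (funext fun t => le_antisymm (hble t) (hc t))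
      obtain ⟨t, ht⟩ := hex
      apply hmin t (by omega)
      apply monF_mem_span.mpr
      refine ⟨b, hbB, fun y => ?_⟩
      simp only [Pi.sub_apply, Pi.single_apply]
      have := hble y
      rcases eq_or_ne y t with rfl | hyt
      · rw [if_pos rfl]; omega
      · rw [if_neg hyt]; omega
  · intro hbB
    refine ⟨Ideal.subset_span ⟨u, hbB, rfl⟩, ?_⟩
    intro t hpos hmem
    obtain ⟨b', hb'B, hb'le⟩ := monF_mem_span.mp hmem
    have hle' : ∀ y, b' y ≤ u y := by
      intro y
      have h0 := hb'le y
      simp only [Pi.sub_apply, Pi.single_apply] at h0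
      rcases eq_or_ne y t with rfl | hyt
      · rw [if_pos rfl] at h0; omega
      · rw [if_neg hyt] at h0; omega
    have heq := Bset_antichain hss b' hb'B u hbB hle'
    have h2 := hb'le t
    rw [heq] at h2
    simp only [Pi.sub_apply, Pi.single_apply, if_true] at h2
    omega

lemma mem_Istar_of_cover (hss : StronglyStable I) {c : Fin d → ℕ}
    (hc : CoverG I (Tset c)) : monF k c ∈ Istar d I := by
  obtain ⟨F'', hsub, hmc''⟩ := exists_minCov (Tset c).ncard (Tset c) (le_refl _) hc
  exact monF_mem_span.mpr ⟨vecF F'', ⟨F'', hmc'', rfl⟩,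
    fun t => vecF_le_of_subset hsub t⟩

lemma Istar_stronglyStable (hss : StronglyStable I) : StronglyStable (Istar d I) := by
  constructor
  · exact ⟨Bset d I, rfl⟩
  · intro a ha i j hj hpos
    rw [minGens_Istar hss] at ha
    have hBS := Bset_cover hss ha
    have hjv : (j:ℕ) < (i:ℕ) := hj
    have key : ∀ y, PsN (a - Pi.single i 1 + Pi.single j 1) y + (if (i:ℕ) < y then 1 else 0)
        = PsN a y + (if (j:ℕ) < y then 1 else 0) := by
      intro y
      have h1 := PsN_add_single (a - Pi.single i 1) j y
      have h2 := PsN_sub_single a i y hpos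
      omega
    have hple : ∀ u, PsN a u ≤ PsN (a - Pi.single i 1 + Pi.single j 1) u := by
      intro u
      have hk := key u
      rcases Nat.lt_or_ge (i:ℕ) u with h1 | h1
      · rw [if_pos h1, if_pos (by omega)] at hk; omega
      · rw [if_neg (by omega)] at hk
        rcases Nat.lt_or_ge (j:ℕ) u with h2 | h2
        · rw [if_pos h2] at hk; omega
        · rw [if_neg (by omega)] at hk; omega
    have hdeq : PsN (a - Pi.single i 1 + Pi.single j 1) d = PsN a d := by
      have hk := key d
      rw [if_pos i.isLt, if_pos j.isLt] at hk
      omega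
    have hcov : CoverG I (Tset (a - Pi.single i 1 + Pi.single j 1)) := by
      apply MONvec (b' := a) hBS.1
      · rw [hdeq]
      · rw [hdeq]; exact hBS.2
      · exact hple
    apply mem_Istar_of_cover hss hcov

lemma Istar_gensDegLE (hss : StronglyStable I) : GensDegLE (Istar d I) n := by
  intro a ha
  rw [minGens_Istar hss] at ha
  have := Bset_cover hss ha
  rw [degV_eq_PsN]
  exact this.2

lemma rename_monF (e : Fin n × Fin d → ℕ) :
    (MvPolynomial.rename (Prod.swap : Fin n × Fin d → Fin d × Fin n)) (monF k e)
      = monF k (fun p => e (Prod.swap p)) := by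
  rw [monF_eq, MvPolynomial.rename_monomial, monF_eq]
  have h : Finsupp.mapDomain (Prod.swap : Fin n × Fin d → Fin d × Fin n)
      (Finsupp.equivFunOnFinite.symm e)
      = Finsupp.equivFunOnFinite.symm (fun p => e (Prod.swap p)) := by
    ext p
    have hp : p = Prod.swap (Prod.swap p) := (Prod.swap_swap p).symm
    rw [hp, Finsupp.mapDomain_apply Prod.swap_injective]
    rfl
  rw [h]

lemma bpol_le_varIdeal_iff (F : Set (Fin n × Fin d)) :
    bpolIdeal d I ≤ varIdeal k F ↔ CoverG I F := by
  unfold bpolIdeal varIdeal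
  rw [Ideal.span_le]
  constructor
  · intro h g hg
    have hq : monF k (bpolExp d g) ∈ Ideal.span (MvPolynomial.X '' F
        : Set (MvPolynomial (Fin n × Fin d) k)) := h ⟨g, hg, rfl⟩
    obtain ⟨p, hpF, hp0⟩ := monF_mem_varSpan.mp hq
    exact ⟨p, hpF, (bpolExp_ne_zero g p).mp hp0⟩
  · rintro h q ⟨g, hg, rfl⟩
    apply SetLike.mem_coe.mpr
    apply monF_mem_varSpan.mpr
    obtain ⟨p, hpF, hins⟩ := h g hg
    exact ⟨p, hpF, (bpolExp_ne_zero g p).mpr hins⟩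

lemma isIrredComp_iff_minCov (F : Set (Fin n × Fin d)) :
    IsIrredCompSF (bpolIdeal d I) F ↔ MinCov I F := by
  unfold IsIrredCompSF MinCov
  rw [bpol_le_varIdeal_iff F]
  constructor
  · rintro ⟨h1, h2⟩
    exact ⟨h1, fun F' hs hc => h2 F' hs ((bpol_le_varIdeal_iff F').mpr hc)⟩
  · rintro ⟨h1, h2⟩
    exact ⟨h1, fun F' hs hc => h2 F' hs ((bpol_le_varIdeal_iff F').mp hc)⟩

lemma chi_swap_eq_bpolExp (hss : StronglyStable I) {F : Set (Fin n × Fin d)}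
    (hmc : MinCov I F) :
    (fun p : Fin d × Fin n =>
      (fun q : Fin n × Fin d => if q ∈ F then (1:ℕ) else 0) (Prod.swap p))
      = bpolExp n (vecF F) := by
  funext p
  obtain ⟨t, s⟩ := p
  rw [bpolExp_apply]
  simp only [Prod.swap_prod_mk]
  have hTs := memF_iff_Tset hss hmc
  by_cases hsF : (s, t) ∈ F
  · rw [if_pos hsF, if_pos ?_]
    rw [hTs] at hsF
    exact hsF
  · rw [if_neg hsF, if_neg ?_]
    intro hc
    apply hsF
    rw [hTs]
    exact hc

lemma Istar_bpol_eq (hss : StronglyStable I) :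
    bpolIdeal n (Istar d I) = transposeIdeal (adual (bpolIdeal d I)) := by
  have hADU : adual (bpolIdeal d I) = Ideal.span {q : MvPolynomial (Fin n × Fin d) k |
      ∃ F : Set (Fin n × Fin d), MinCov I F ∧
        q = monF k (fun p => if p ∈ F then 1 else 0)} := by
    unfold adual
    congr 1
    ext q
    simp only [Set.mem_setOf_eq]
    exact exists_congr (fun F => and_congr_left' (isIrredComp_iff_minCov F))
  unfold transposeIdeal
  rw [hADU, Ideal.map_span]
  unfold bpolIdeal
  rw [minGens_Istar hss]
  congr 1
  ext q
  simp only [Set.mem_image, Set.mem_setOf_eq]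
  constructor
  · rintro ⟨a, ⟨F, hmc, rfl⟩, rfl⟩
    refine ⟨monF k (fun p => if p ∈ F then 1 else 0), ⟨F, hmc, rfl⟩, ?_⟩
    rw [rename_monF, chi_swap_eq_bpolExp hss hmc]
  · rintro ⟨q', ⟨F, hmc, rfl⟩, rfl⟩
    refine ⟨vecF F, ⟨F, hmc, rfl⟩, ?_⟩
    rw [rename_monF, chi_swap_eq_bpolExp hss hmc]

end Final

end SY
end SY

/-- For every strongly stable ideal `I ⊆ k[x_1,…,x_n]` with generators of
degree ≤ d there is a strongly stable ideal `I* ⊆ k[y_1,…,y_d]` with generators of degree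
≤ n such that `b-pol(I*) = (b-pol(I)^∨)ᵗ`. -/
theorem exists_dual_stronglyStable {n d : ℕ} {k : Type*} [Field k]
    (I : Ideal (MvPolynomial (Fin n) k)) (hss : StronglyStable I) (hd : GensDegLE I d) :
    ∃ Istar : Ideal (MvPolynomial (Fin d) k),
      StronglyStable Istar ∧ GensDegLE Istar n ∧
      bpolIdeal n Istar = transposeIdeal (adual (bpolIdeal d I)) :=
  ⟨SY.Istar d I, SY.Istar_stronglyStable hss, SY.Istar_gensDegLE hss, SY.Istar_bpol_eq hss⟩
end

section
/- The Alexander duality for strongly stable ideals is an involution: (I*)* = I. -/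
open MvPolynomial Classical

noncomputable section Aux
variable {σ : Type*} [Fintype σ] {k : Type*} [Field k]

lemma equiv_symm_add (a b : σ → ℕ) : Finsupp.equivFunOnFinite.symm (a+b) =
    Finsupp.equivFunOnFinite.symm a + Finsupp.equivFunOnFinite.symm b := by
  ext i; simp

lemma monF_mul (a b : σ → ℕ) : monF k a * monF k b = monF k (a + b) := by
  simp [monF, mon, monomial_mul, equiv_symm_add]

lemma X_eq_monF (i : σ) : (X i : MvPolynomial σ k) = monF k (Pi.single i 1) := by
  have : Finsupp.equivFunOnFinite.symm (Pi.single i 1) = Finsupp.single i (1:ℕ) := by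
    ext j; simp [Pi.single_apply, Finsupp.single_apply, eq_comm]
  simp [monF, mon, this, X, MvPolynomial.monomial]

lemma mem_span_monF_of_le {A : Set (σ → ℕ)} {a b : σ → ℕ} (ha : a ∈ A)
    (hle : ∀ i, a i ≤ b i) : monF k b ∈ Ideal.span ((monF k) '' A) := by
  have : monF k b = monF k (b - a) * monF k a := by
    rw [monF_mul]; congr 1; funext i
    simp only [Pi.add_apply, Pi.sub_apply]
    have := hle i
    omega
  rw [this]
  exact Ideal.mul_mem_left _ _ (Ideal.subset_span ⟨a, ha, rfl⟩)

lemma monF_mem_span_iff {A : Set (σ → ℕ)} {b : σ → ℕ} :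
    monF k b ∈ Ideal.span ((monF k) '' A) ↔ ∃ a ∈ A, ∀ i, a i ≤ b i := by
  constructor
  · intro hmem
    rw [Ideal.span, Submodule.mem_span_set] at hmem
    obtain ⟨c, hsupp, hsum⟩ := hmem
    by_contra hno
    push_neg at hno
    have hcoeff : MvPolynomial.coeff (Finsupp.equivFunOnFinite.symm b) (monF k b) = 1 := by
      simp [monF, mon, coeff_monomial]
    rw [← hsum, Finsupp.sum, coeff_sum] at hcoeff
    have : ∀ m ∈ c.support, MvPolynomial.coeff (Finsupp.equivFunOnFinite.symm b) (c m • m) = 0 := by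
      intro m hm
      obtain ⟨a, ha, rfl⟩ := hsupp hm
      rw [smul_eq_mul, monF, mon, coeff_mul_monomial', if_neg]
      intro hle
      obtain ⟨i, hi⟩ := hno a ha
      rw [Finsupp.le_def] at hle
      exact absurd (hle i) (by simpa using hi)
    rw [Finset.sum_eq_zero this] at hcoeff
    exact one_ne_zero hcoeff.symm
  · rintro ⟨a, ha, hle⟩
    exact mem_span_monF_of_le ha hle

/-- minGens monomials generate a monomial ideal. -/
lemma span_minGens {I : Ideal (MvPolynomial σ k)} (hI : IsMonomialIdeal I) :
    I = Ideal.span ((monF k) '' minGens I) := by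
  obtain ⟨A, hA⟩ := hI
  apply le_antisymm
  · have key : ∀ m : ℕ, ∀ a : σ → ℕ, degV a ≤ m → monF k a ∈ I →
        monF k a ∈ Ideal.span ((monF k) '' minGens I) := by
      intro m
      induction m with
      | zero =>
        intro a hdeg hmem
        have ha0 : a = 0 := by
          funext i
          show a i = 0
          have : a i ≤ degV a := Finset.single_le_sum (fun j _ => Nat.zero_le _) (Finset.mem_univ i)
          omega
        refine Ideal.subset_span ⟨a, ⟨hmem, ?_⟩, rfl⟩
        intro i hi
        rw [ha0] at hi
        simp only [Pi.zero_apply, lt_self_iff_false] at hi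
      | succ m ih =>
        intro a hdeg hmem
        by_cases hmin : a ∈ minGens I
        · exact Ideal.subset_span ⟨a, hmin, rfl⟩
        · have : ∃ i, 0 < a i ∧ monF k (a - Pi.single i 1) ∈ I := by
            by_contra hc
            push_neg at hc
            exact hmin ⟨hmem, fun i hi => hc i hi⟩
          obtain ⟨i, hi, hmem'⟩ := this
          have hdeg' : degV (a - Pi.single i 1) ≤ m := by
            have h1 : degV (a - Pi.single i 1) + 1 ≤ degV a := by
              unfold degV
              rw [← Finset.add_sum_erase _ a (Finset.mem_univ i),
                ← Finset.add_sum_erase _ (a - Pi.single i 1) (Finset.mem_univ i)]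
              have he : ∀ j ∈ Finset.univ.erase i, (a - Pi.single i 1 : σ → ℕ) j = a j := by
                intro j hj
                have : j ≠ i := Finset.ne_of_mem_erase hj
                simp [Pi.sub_apply, Pi.single_apply, this]
              rw [Finset.sum_congr rfl he]
              have h3 : (a - Pi.single i 1 : σ → ℕ) i = a i - 1 := by
                simp [Pi.sub_apply]
              have h2 : (Finset.univ.erase i).sum a = ∑ x ∈ Finset.univ.erase i, a x := rfl
              omega
            omega
          have := ih _ hdeg' hmem'
          have heq : monF k a = X i * monF k (a - Pi.single i 1) := by
            rw [X_eq_monF, monF_mul]; congr 1; funext j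
            by_cases hji : j = i
            · subst hji; simp [Pi.single_apply]; omega
            · simp [Pi.single_apply, hji]
          rw [heq]
          exact Ideal.mul_mem_left _ _ this
    conv_lhs => rw [hA]
    rw [Ideal.span_le]
    rintro q ⟨a, ha, rfl⟩
    exact key (degV a) a le_rfl (hA ▸ Ideal.subset_span ⟨a, ha, rfl⟩)
  · rw [Ideal.span_le]
    rintro q ⟨a, ha, rfl⟩
    exact ha.1
end Aux

noncomputable section Aux2
variable {σ : Type*} [Fintype σ] {k : Type*} [Field k]

/-- Transversal of a set system. -/
def TrS {σ : Type*} (H : Set (Set σ)) (F : Set σ) : Prop := ∀ e ∈ H, ∃ i, i ∈ e ∧ i ∈ F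

/-- Minimal transversal. -/
def MinTrS {σ : Type*} (H : Set (Set σ)) (F : Set σ) : Prop :=
  TrS H F ∧ ∀ F' ⊆ F, TrS H F' → F' = F

def suppV {σ : Type*} (a : σ → ℕ) : Set σ := {i | a i ≠ 0}

def indV {σ : Type*} (F : Set σ) : σ → ℕ := fun i => if i ∈ F then 1 else 0

lemma trS_mono {H : Set (Set σ)} {F F' : Set σ} (h : F ⊆ F') (hF : TrS H F) : TrS H F' := by
  intro e he
  obtain ⟨i, hi1, hi2⟩ := hF e he
  exact ⟨i, hi1, h hi2⟩

lemma exists_minTr_subset {H : Set (Set σ)} {T : Set σ} (hT : TrS H T) :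
    ∃ T' ⊆ T, MinTrS H T' := by
  have key : ∀ m : ℕ, ∀ T : Set σ, T.ncard ≤ m → TrS H T → ∃ T' ⊆ T, MinTrS H T' := by
    intro m
    induction m with
    | zero =>
      intro T hc hT
      refine ⟨T, subset_rfl, hT, fun F' hF' hTF' => ?_⟩
      have : T = ∅ := by
        rw [← Set.ncard_eq_zero T.toFinite] at *
        omega
      subst this
      exact Set.eq_of_subset_of_subset hF' (Set.empty_subset _) ▸ (Set.subset_empty_iff.mp hF')
    | succ m ih =>
      intro T hc hT
      by_cases hmin : ∀ F' ⊆ T, TrS H F' → F' = T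
      · exact ⟨T, subset_rfl, hT, hmin⟩
      · push_neg at hmin
        obtain ⟨F', hsub, htr, hne⟩ := hmin
        have hss : F' ⊂ T := ⟨hsub, fun h => hne (Set.eq_of_subset_of_subset hsub h)⟩
        have : F'.ncard ≤ m := by
          have := Set.ncard_lt_ncard hss T.toFinite
          omega
        obtain ⟨T', hT', hmin⟩ := ih F' this htr
        exact ⟨T', hT'.trans hsub, hmin⟩
  exact key T.ncard T le_rfl hT

lemma edge_trS {H : Set (Set σ)} {e : Set σ} (he : e ∈ H) : TrS {F | MinTrS H F} e := by
  intro T hT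
  obtain ⟨i, hie, hiT⟩ := hT.1 e he
  exact ⟨i, hiT, hie⟩

lemma mintr_mintr {H : Set (Set σ)} (hH : ∀ e ∈ H, ∀ f ∈ H, e ⊆ f → e = f) :
    {T | MinTrS {F | MinTrS H F} T} = H := by
  ext T
  constructor
  · rintro ⟨htr, hmin⟩
    -- there exists an edge inside T
    have hedge : ∃ e ∈ H, e ⊆ T := by
      by_contra hc
      push_neg at hc
      have hS : TrS H ((⋃₀ H) \ T) := by
        intro f hf
        obtain ⟨i, hif, hiT⟩ := Set.not_subset.mp (hc f hf)
        exact ⟨i, hif, ⟨Set.mem_sUnion.mpr ⟨f, hf, hif⟩, hiT⟩⟩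
      obtain ⟨T₀, hT₀S, hT₀⟩ := exists_minTr_subset hS
      obtain ⟨i, hiT₀, hiT⟩ := htr T₀ hT₀
      exact (hT₀S hiT₀).2 hiT
    obtain ⟨e, heH, heT⟩ := hedge
    have := hmin e heT (edge_trS heH)
    rwa [← this]
  · intro heH
    refine ⟨edge_trS heH, ?_⟩
    intro F' hF' htrF'
    by_contra hne
    have hss : F' ⊂ T := ⟨hF', fun h => hne (Set.eq_of_subset_of_subset hF' h)⟩
    have hS : TrS H ((⋃₀ H) \ F') := by
      intro f hf
      have : ¬ f ⊆ F' := by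
        intro hsub
        have hfT : f = T := hH f hf T heH (hsub.trans hF')
        exact hne (Set.eq_of_subset_of_subset hF' (hfT ▸ hsub))
      obtain ⟨i, hif, hiF'⟩ := Set.not_subset.mp this
      exact ⟨i, hif, ⟨Set.mem_sUnion.mpr ⟨f, hf, hif⟩, hiF'⟩⟩
    obtain ⟨T₀, hT₀S, hT₀⟩ := exists_minTr_subset hS
    obtain ⟨i, hiT₀, hiF'⟩ := htrF' T₀ hT₀
    exact (hT₀S hiT₀).2 hiF'

end Aux2

noncomputable section Aux3
set_option linter.unusedSectionVars false
variable {σ : Type*} [Fintype σ] {k : Type*} [Field k]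

lemma varIdeal_eq_span (F : Set σ) :
    varIdeal k F = Ideal.span ((monF k) '' ((fun i => Pi.single i 1) '' F)) := by
  unfold varIdeal
  congr 1
  rw [Set.image_image]
  apply Set.image_congr
  intro i _
  exact X_eq_monF i

lemma span_le_varIdeal_iff (A : Set (σ → ℕ)) (F : Set σ) :
    Ideal.span ((monF k) '' A) ≤ varIdeal k F ↔ ∀ a ∈ A, ∃ i, i ∈ suppV a ∧ i ∈ F := by
  rw [varIdeal_eq_span, Ideal.span_le]
  constructor
  · intro h a ha
    have : monF k a ∈ Ideal.span ((monF k) '' ((fun i => Pi.single i 1) '' F)) :=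
      h ⟨a, ha, rfl⟩
    rw [monF_mem_span_iff] at this
    obtain ⟨b, ⟨i, hiF, rfl⟩, hle⟩ := this
    refine ⟨i, ?_, hiF⟩
    have := hle i
    simp only [Pi.single_eq_same] at this
    simp only [suppV, Set.mem_setOf_eq]
    omega
  · intro h
    rintro q ⟨a, ha, rfl⟩
    obtain ⟨i, hia, hiF⟩ := h a ha
    refine mem_span_monF_of_le (show Pi.single i 1 ∈ (fun i => Pi.single i 1) '' F from ⟨i, hiF, rfl⟩) ?_
    intro j
    by_cases hji : j = i
    · subst hji
      simp only [Pi.single_eq_same]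
      simp only [suppV, Set.mem_setOf_eq] at hia
      omega
    · simp [Pi.single_apply, hji]

lemma isIrredComp_iff_minTr (A : Set (σ → ℕ)) (F : Set σ) :
    IsIrredCompSF (Ideal.span ((monF k) '' A)) F ↔ MinTrS (suppV '' A) F := by
  unfold IsIrredCompSF MinTrS
  have htr : ∀ G : Set σ, (Ideal.span ((monF k) '' A) ≤ varIdeal k G ↔ TrS (suppV '' A) G) := by
    intro G
    rw [span_le_varIdeal_iff]
    constructor
    · rintro h e ⟨a, ha, rfl⟩
      exact h a ha
    · intro h a ha
      exact h (suppV a) ⟨a, ha, rfl⟩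
  rw [htr]
  constructor
  · rintro ⟨h1, h2⟩
    exact ⟨h1, fun F' hF' htrF' => h2 F' hF' ((htr F').mpr htrF')⟩
  · rintro ⟨h1, h2⟩
    exact ⟨h1, fun F' hF' hle => h2 F' hF' ((htr F').mp hle)⟩

lemma adual_span (A : Set (σ → ℕ)) :
    adual (Ideal.span ((monF k) '' A)) =
      Ideal.span ((monF k) '' (indV '' {F | MinTrS (suppV '' A) F})) := by
  unfold adual
  congr 1
  ext q
  constructor
  · rintro ⟨F, hF, rfl⟩
    exact ⟨indV F, ⟨F, (isIrredComp_iff_minTr A F).mp hF, rfl⟩, rfl⟩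
  · rintro ⟨b, ⟨F, hF, rfl⟩, rfl⟩
    exact ⟨F, (isIrredComp_iff_minTr A F).mpr hF, rfl⟩

lemma suppV_indV (F : Set σ) : suppV (indV F) = F := by
  ext i
  simp [suppV, indV]

lemma indV_suppV {a : σ → ℕ} (h : ∀ i, a i ≤ 1) : indV (suppV a) = a := by
  funext i
  simp only [indV, suppV, Set.mem_setOf_eq]
  by_cases h0 : a i = 0
  · simp [h0]
  · have := h i
    rw [if_pos h0]
    omega

lemma adual_adual (A : Set (σ → ℕ)) (hsf : ∀ a ∈ A, ∀ i, a i ≤ 1)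
    (hac : ∀ a ∈ A, ∀ b ∈ A, (∀ i, b i ≤ a i) → a = b) :
    adual (adual (Ideal.span ((monF k) '' A))) = Ideal.span ((monF k) '' A) := by
  have hachain : ∀ e ∈ suppV '' A, ∀ f ∈ suppV '' A, e ⊆ f → e = f := by
    rintro e ⟨a, ha, rfl⟩ f ⟨b, hb, rfl⟩ hef
    have hab : ∀ i, a i ≤ b i := by
      intro i
      by_cases h0 : a i = 0
      · omega
      · have hib : i ∈ suppV b := hef h0
        have := hsf a ha i
        simp only [suppV, Set.mem_setOf_eq] at hib
        omega
    rw [hac b hb a ha hab]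
  rw [adual_span, adual_span]
  have h1 : suppV '' (indV '' {F | MinTrS (suppV '' A) F}) = {F | MinTrS (suppV '' A) F} := by
    rw [Set.image_image]
    simp only [suppV_indV, Set.image_id']
  rw [h1, mintr_mintr hachain]
  congr 1
  have h2 : indV '' (suppV '' A) = A := by
    rw [Set.image_image]
    have : ∀ a ∈ A, indV (suppV a) = a := fun a ha => indV_suppV (hsf a ha)
    calc (fun a => indV (suppV a)) '' A = id '' A := Set.image_congr (fun a ha => this a ha)
    _ = A := Set.image_id A
  rw [h2]
end Aux3

noncomputable section Aux4
set_option linter.unusedSectionVars false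
variable {σ τ : Type*} [Fintype σ] [Fintype τ] {k : Type*} [Field k]

lemma rename_monF (e : σ ≃ τ) (a : σ → ℕ) :
    rename (⇑e) (monF k a) = monF k (a ∘ ⇑e.symm) := by
  have harg : Finsupp.mapDomain ⇑e (Finsupp.equivFunOnFinite.symm a) =
      Finsupp.equivFunOnFinite.symm (a ∘ ⇑e.symm) := by
    apply Finsupp.ext
    intro j
    have hj : j = e (e.symm j) := (e.apply_symm_apply j).symm
    rw [hj, Finsupp.mapDomain_apply e.injective]
    simp
  rw [monF, monF, mon, mon, rename_monomial, harg]

lemma map_rename_span (e : σ ≃ τ) (s : Set (MvPolynomial σ k)) :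
    Ideal.map (rename (⇑e) : MvPolynomial σ k →ₐ[k] MvPolynomial τ k) (Ideal.span s) =
      Ideal.span (rename (⇑e) '' s) :=
  Ideal.map_span _ s

lemma map_rename_varIdeal (e : σ ≃ τ) (F : Set σ) :
    Ideal.map (rename (⇑e) : MvPolynomial σ k →ₐ[k] MvPolynomial τ k) (varIdeal k F) =
      varIdeal k (⇑e '' F) := by
  rw [varIdeal, map_rename_span, varIdeal, ← Set.image_comp, ← Set.image_comp]
  congr 1
  funext i
  simp [rename_X]

lemma map_rename_le_iff (e : σ ≃ τ) (I J : Ideal (MvPolynomial σ k)) :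
    Ideal.map (rename (⇑e) : MvPolynomial σ k →ₐ[k] MvPolynomial τ k) I ≤
      Ideal.map (rename (⇑e) : MvPolynomial σ k →ₐ[k] MvPolynomial τ k) J ↔ I ≤ J := by
  constructor
  · intro h x hx
    have hbij : Function.Bijective (rename (⇑e) : MvPolynomial σ k →ₐ[k] MvPolynomial τ k) := by
      constructor
      · exact rename_injective _ e.injective
      · intro p
        refine ⟨rename (⇑e.symm) p, ?_⟩
        rw [rename_rename]
        simp [Equiv.self_comp_symm]
    have h1 : rename (⇑e) x ∈ Ideal.map (rename (⇑e) : MvPolynomial σ k →ₐ[k] MvPolynomial τ k) J :=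
      h (Ideal.mem_map_of_mem _ hx)
    have h2 := Ideal.comap_map_of_bijective _ hbij (I := J)
    rw [← h2]
    exact h1
  · intro h
    exact Ideal.map_mono h

lemma irredComp_map_iff (e : σ ≃ τ) (J : Ideal (MvPolynomial σ k)) (F : Set τ) :
    IsIrredCompSF (Ideal.map (rename (⇑e) : MvPolynomial σ k →ₐ[k] MvPolynomial τ k) J) F ↔
      IsIrredCompSF J (⇑e.symm '' F) := by
  have himg : ∀ G : Set σ, ⇑e.symm '' (⇑e '' G) = G := by
    intro G; rw [← Set.image_comp]; simp [Equiv.symm_comp_self]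
  have himg' : ∀ G : Set τ, ⇑e '' (⇑e.symm '' G) = G := by
    intro G; rw [← Set.image_comp]; simp [Equiv.self_comp_symm]
  have key : ∀ G : Set τ,
      (Ideal.map (rename (⇑e) : MvPolynomial σ k →ₐ[k] MvPolynomial τ k) J ≤ varIdeal k G ↔
        J ≤ varIdeal k (⇑e.symm '' G)) := by
    intro G
    rw [← map_rename_le_iff e, map_rename_varIdeal, himg']
  unfold IsIrredCompSF
  rw [key]
  constructor
  · rintro ⟨h1, h2⟩
    refine ⟨h1, fun G' hG' hle => ?_⟩
    have hsub : ⇑e '' G' ⊆ F := by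
      intro x hx
      obtain ⟨y, hy, rfl⟩ := hx
      obtain ⟨z, hz, hze⟩ := hG' hy
      rw [← hze]
      simpa using hz
    have := h2 (⇑e '' G') hsub (by rw [key, himg]; exact hle)
    rw [← this, himg]
  · rintro ⟨h1, h2⟩
    refine ⟨h1, fun F' hF' hle => ?_⟩
    have hsub : ⇑e.symm '' F' ⊆ ⇑e.symm '' F := Set.image_mono hF'
    have := h2 (⇑e.symm '' F') hsub ((key F').mp hle)
    have := congrArg (Set.image ⇑e) this
    rwa [himg', himg'] at this

lemma indV_image (e : σ ≃ τ) (G : Set σ) :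
    (indV G) ∘ ⇑e.symm = indV (⇑e '' G) := by
  funext i
  simp only [indV, Function.comp_apply]
  congr 1
  simp only [eq_iff_iff]
  constructor
  · intro h; exact ⟨e.symm i, h, by simp⟩
  · rintro ⟨y, hy, hyi⟩
    rw [← hyi]; simpa using hy

lemma adual_def' (J : Ideal (MvPolynomial σ k)) :
    adual J = Ideal.span {q | ∃ F : Set σ, IsIrredCompSF J F ∧ q = monF k (indV F)} := rfl

lemma adual_map (e : σ ≃ τ) (J : Ideal (MvPolynomial σ k)) :
    adual (Ideal.map (rename (⇑e) : MvPolynomial σ k →ₐ[k] MvPolynomial τ k) J) =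
      Ideal.map (rename (⇑e) : MvPolynomial σ k →ₐ[k] MvPolynomial τ k) (adual J) := by
  rw [adual_def', adual_def', map_rename_span]
  congr 1
  ext q
  constructor
  · rintro ⟨F, hF, rfl⟩
    rw [irredComp_map_iff] at hF
    refine ⟨monF k (indV (⇑e.symm '' F)), ⟨⇑e.symm '' F, hF, rfl⟩, ?_⟩
    rw [rename_monF, indV_image]
    congr 1
    rw [← Set.image_comp]
    simp [Equiv.self_comp_symm]
  · rintro ⟨p, ⟨G, hG, rfl⟩, rfl⟩
    refine ⟨⇑e '' G, ?_, ?_⟩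
    · rw [irredComp_map_iff]
      rwa [← Set.image_comp, Equiv.symm_comp_self, Set.image_id]
    · rw [rename_monF, indV_image]

end Aux4

noncomputable section Aux5
set_option linter.unusedSectionVars false
variable {k : Type*} [Field k]

lemma transposeIdeal_as_map {n d : ℕ} (J : Ideal (MvPolynomial (Fin n × Fin d) k)) :
    transposeIdeal J =
      Ideal.map (rename (⇑(Equiv.prodComm (Fin n) (Fin d))) :
        MvPolynomial (Fin n × Fin d) k →ₐ[k] MvPolynomial (Fin d × Fin n) k) J := rfl

lemma transpose_adual {n d : ℕ} (J : Ideal (MvPolynomial (Fin n × Fin d) k)) :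
    transposeIdeal (adual J) = adual (transposeIdeal J) := by
  rw [transposeIdeal_as_map, transposeIdeal_as_map, adual_map]

lemma transpose_transpose {n d : ℕ} (K : Ideal (MvPolynomial (Fin n × Fin d) k)) :
    transposeIdeal (transposeIdeal K) = K := by
  unfold transposeIdeal
  have h1 : ∀ {α β : Type} (J : Ideal (MvPolynomial α k))
      (f : MvPolynomial α k →ₐ[k] MvPolynomial β k),
      Ideal.map f J = Ideal.map f.toRingHom J := fun _ _ => rfl
  rw [h1, h1, Ideal.map_map]
  have : (rename (Prod.swap : Fin d × Fin n → Fin n × Fin d) :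
      MvPolynomial (Fin d × Fin n) k →ₐ[k] MvPolynomial (Fin n × Fin d) k).toRingHom.comp
      (rename (Prod.swap : Fin n × Fin d → Fin d × Fin n) :
      MvPolynomial (Fin n × Fin d) k →ₐ[k] MvPolynomial (Fin d × Fin n) k).toRingHom =
      RingHom.id _ := by
    apply RingHom.ext
    intro p
    simp only [RingHom.comp_apply, AlgHom.toRingHom_eq_coe, RingHom.coe_coe, RingHom.id_apply]
    rw [rename_rename]
    have hs : (Prod.swap : Fin d × Fin n → Fin n × Fin d) ∘ Prod.swap = id := by
      funext x; simp
    rw [hs, rename_id]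
    rfl
  rw [this, Ideal.map_id]

lemma bpolIdeal_as_span {N D : ℕ} (J : Ideal (MvPolynomial (Fin N) k)) :
    bpolIdeal D J = Ideal.span ((monF k) '' (bpolExp D '' minGens J)) := by
  unfold bpolIdeal
  congr 1
  ext q
  constructor
  · rintro ⟨a, ha, rfl⟩
    exact ⟨bpolExp D a, ⟨a, ha, rfl⟩, rfl⟩
  · rintro ⟨b, ⟨a, ha, rfl⟩, rfl⟩
    exact ⟨a, ha, rfl⟩

lemma _root_.psum_add_le_degV {N : ℕ} (a : Fin N → ℕ) (i : Fin N) : _root_.psum a i + a i ≤ degV a := by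
  unfold _root_.psum degV
  have hnm : i ∉ Finset.univ.filter (fun j => j < i) := by simp
  rw [add_comm, ← Finset.sum_insert hnm]
  exact Finset.sum_le_sum_of_subset (Finset.subset_univ _)

lemma card_filter_interval {D : ℕ} (c m : ℕ) (h : c + m ≤ D) :
    (Finset.univ.filter (fun j : Fin D => c ≤ (j : ℕ) ∧ (j : ℕ) < c + m)).card = m := by
  have hlt : ∀ x ∈ Finset.Ico c (c + m), x < D := by
    intro x hx
    rw [Finset.mem_Ico] at hx
    omega
  have : Finset.univ.filter (fun j : Fin D => c ≤ (j : ℕ) ∧ (j : ℕ) < c + m) =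
      (Finset.Ico c (c + m)).attachFin hlt := by
    ext j
    simp [Finset.mem_attachFin, Finset.mem_Ico]
  rw [this, Finset.card_attachFin, Nat.card_Ico]
  omega

lemma bpolExp_le {N D : ℕ} {a b : Fin N → ℕ} (hda : degV a ≤ D) (hdb : degV b ≤ D)
    (h : ∀ p, bpolExp D b p ≤ bpolExp D a p) : ∀ i, b i ≤ a i := by
  intro i
  have hca : _root_.psum a i + a i ≤ D := le_trans (_root_.psum_add_le_degV a i) hda
  have hcb : _root_.psum b i + b i ≤ D := le_trans (_root_.psum_add_le_degV b i) hdb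
  rw [← card_filter_interval (_root_.psum a i) (a i) hca, ← card_filter_interval (_root_.psum b i) (b i) hcb]
  apply Finset.card_le_card
  intro j hj
  rw [Finset.mem_filter] at hj ⊢
  refine ⟨Finset.mem_univ _, ?_⟩
  have hb1 : bpolExp D b (i, j) = 1 := by
    unfold bpolExp
    rw [if_pos]
    exact hj.2
  have := h (i, j)
  rw [hb1] at this
  unfold bpolExp at this
  by_contra hc
  rw [if_neg hc] at this
  omega

lemma bpolExp_sqfree {N D : ℕ} (a : Fin N → ℕ) (p : Fin N × Fin D) : bpolExp D a p ≤ 1 := by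
  unfold bpolExp
  split <;> omega

lemma minGens_antichain {σ : Type*} [Fintype σ] {I : Ideal (MvPolynomial σ k)} {a b : σ → ℕ}
    (ha : a ∈ minGens I) (hb : b ∈ minGens I) (hle : ∀ i, b i ≤ a i) : a = b := by
  by_contra hne
  have : ∃ i, b i < a i := by
    by_contra hc
    push_neg at hc
    exact hne (funext fun i => le_antisymm (hc i) (hle i))
  obtain ⟨i, hi⟩ := this
  have hmem : monF k (a - Pi.single i 1) ∈ I := by
    have heq : (a - Pi.single i 1 : σ → ℕ) = ((a - Pi.single i 1 : σ → ℕ) - b) + b := by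
      funext j
      by_cases hji : j = i
      · subst hji
        have := hle j
        simp only [Pi.add_apply, Pi.sub_apply, Pi.single_eq_same]
        omega
      · have := hle j
        simp only [Pi.add_apply, Pi.sub_apply, Pi.single_apply, hji, if_false]
        omega
    rw [heq, ← monF_mul]
    exact Ideal.mul_mem_left _ _ hb.1
  exact ha.2 i (by omega) hmem

/-- Antichain property of bpolExp images of minGens. -/
lemma bpol_gens_antichain {N D : ℕ} {I : Ideal (MvPolynomial (Fin N) k)} (hd : GensDegLE I D) :
    ∀ x ∈ bpolExp D '' minGens I, ∀ y ∈ bpolExp D '' minGens I,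
      (∀ p, y p ≤ x p) → x = y := by
  rintro x ⟨a, ha, rfl⟩ y ⟨b, hb, rfl⟩ hle
  have := bpolExp_le (hd a ha) (hd b hb) hle
  rw [minGens_antichain ha hb this]

end Aux5

/-- The Alexander duality `I ↦ I*` for strongly stable ideals, characterized
by `b-pol(I*) = (b-pol(I)^∨)ᵗ`, is an involution: `(I*)* = I`. -/
theorem dual_dual_eq_self {n d : ℕ} {k : Type*} [Field k]
    (I : Ideal (MvPolynomial (Fin n) k)) (hss : StronglyStable I) (hd : GensDegLE I d)
    (Istar : Ideal (MvPolynomial (Fin d) k))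
    (hss' : StronglyStable Istar) (hd' : GensDegLE Istar n)
    (hdual : bpolIdeal n Istar = transposeIdeal (adual (bpolIdeal d I)))
    (Istarstar : Ideal (MvPolynomial (Fin n) k))
    (hss'' : StronglyStable Istarstar) (hd'' : GensDegLE Istarstar d)
    (hdual' : bpolIdeal d Istarstar = transposeIdeal (adual (bpolIdeal n Istar))) :
    Istarstar = I := by
  have hAA : adual (adual (bpolIdeal d I)) = bpolIdeal d I := by
    rw [bpolIdeal_as_span]
    apply adual_adual
    · rintro x ⟨a, ha, rfl⟩ p
      exact bpolExp_sqfree a p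
    · exact bpol_gens_antichain hd
  have hk : bpolIdeal d Istarstar = bpolIdeal d I := by
    rw [hdual', hdual, ← transpose_adual, transpose_transpose, hAA]
  apply le_antisymm
  · conv_lhs => rw [span_minGens hss''.1]
    rw [Ideal.span_le]
    rintro q ⟨a, ha, rfl⟩
    have h1 : monF k (bpolExp d a) ∈ Ideal.span ((monF k) '' (bpolExp d '' minGens I)) := by
      rw [← bpolIdeal_as_span, ← hk, bpolIdeal_as_span]
      exact Ideal.subset_span ⟨bpolExp d a, ⟨a, ha, rfl⟩, rfl⟩
    rw [monF_mem_span_iff] at h1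
    obtain ⟨x, ⟨b, hb, rfl⟩, hle⟩ := h1
    have hba : ∀ i, b i ≤ a i := bpolExp_le (hd'' a ha) (hd b hb) hle
    have hmem : monF k a ∈ Ideal.span ((monF k) '' minGens I) := mem_span_monF_of_le hb hba
    rw [← span_minGens hss.1] at hmem
    exact hmem
  · conv_lhs => rw [span_minGens hss.1]
    rw [Ideal.span_le]
    rintro q ⟨a, ha, rfl⟩
    have h1 : monF k (bpolExp d a) ∈ Ideal.span ((monF k) '' (bpolExp d '' minGens Istarstar)) := by
      rw [← bpolIdeal_as_span, hk, bpolIdeal_as_span]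
      exact Ideal.subset_span ⟨bpolExp d a, ⟨a, ha, rfl⟩, rfl⟩
    rw [monF_mem_span_iff] at h1
    obtain ⟨x, ⟨b, hb, rfl⟩, hle⟩ := h1
    have hba : ∀ i, b i ≤ a i := bpolExp_le (hd a ha) (hd'' b hb) hle
    have hmem : monF k a ∈ Ideal.span ((monF k) '' minGens Istarstar) := mem_span_monF_of_le hb hba
    rw [← span_minGens hss''.1] at hmem
    exact hmem
end
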